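/- arXiv:1708.07959 — 10 statements merged into one kernel-verified Lean document; each statement's English description precedes it below -/
import Mathlib

section
/- Let p, q be positive integers, let m > n ≥ 0 be integers, and let X_n, X_m be C^∞ quasi-homogeneous planar vector fields of weight (p,q) and degrees n and m respectively. Assume b_m(θ) ≠ 0 for all θ and set Φ(θ) := a_n(θ)/b_m(θ) − (b_n/b_m)'(θ). If b_m(θ)Φ(θ) > 0 for all θ ∈ ℝ, then every nonconstant periodic solution γ of the system (dx/dt, dy/dt) = X_n(x,y) + X_m(x,y) with period T > 0 satisfies ∫₀^T div(X_n + X_m)(γ(t)) dt < 0 (so the periodic orbit is a hyperbolic stable limit cycle); if instead b_m(θ)Φ(θ) < 0 for all θ, then ∫₀^T div(X_n + X_m)(γ(t)) dt > 0 (hyperbolic unstable). -/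
set_option maxHeartbeats 4000000

section StmtAux

private lemma clm_eval (L : ℝ×ℝ →L[ℝ] ℝ) (v : ℝ×ℝ) : L v = v.1 * L (1,0) + v.2 * L (0,1) := by
  have hv : v = v.1 • ((1:ℝ),(0:ℝ)) + v.2 • ((0:ℝ),(1:ℝ)) := by
    apply Prod.ext <;> simp
  nth_rewrite 1 [hv]
  rw [map_add, map_smul, map_smul, smul_eq_mul, smul_eq_mul]

section auxcal
variable {F : ℝ → ℝ → ℝ}

private lemma hasFDerivAt_unc (hF : ContDiff ℝ (⊤ : ℕ∞) (fun z : ℝ × ℝ => F z.1 z.2)) (z : ℝ×ℝ) :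
    HasFDerivAt (fun z : ℝ × ℝ => F z.1 z.2) (fderiv ℝ (fun z : ℝ × ℝ => F z.1 z.2) z) z :=
  (hF.differentiable (by simp) z).hasFDerivAt

private lemma pdx (hF : ContDiff ℝ (⊤ : ℕ∞) (fun z : ℝ × ℝ => F z.1 z.2)) (x y : ℝ) :
    HasDerivAt (fun u => F u y) (fderiv ℝ (fun z : ℝ × ℝ => F z.1 z.2) (x,y) (1,0)) x := by
  have hc : HasDerivAt (fun u : ℝ => (u, y)) ((1:ℝ),(0:ℝ)) x :=
    (hasDerivAt_id x).prodMk (hasDerivAt_const x y)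
  simpa [Function.comp_def] using (hasFDerivAt_unc hF (x,y)).comp_hasDerivAt x hc

private lemma pdy (hF : ContDiff ℝ (⊤ : ℕ∞) (fun z : ℝ × ℝ => F z.1 z.2)) (x y : ℝ) :
    HasDerivAt (fun v => F x v) (fderiv ℝ (fun z : ℝ × ℝ => F z.1 z.2) (x,y) (0,1)) y := by
  have hc : HasDerivAt (fun v : ℝ => (x, v)) ((0:ℝ),(1:ℝ)) y :=
    (hasDerivAt_const y x).prodMk (hasDerivAt_id y)
  simpa [Function.comp_def] using (hasFDerivAt_unc hF (x,y)).comp_hasDerivAt y hc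

private lemma scale_x (hF : ContDiff ℝ (⊤ : ℕ∞) (fun z : ℝ × ℝ => F z.1 z.2)) (p q k : ℕ)
    (hqh : ∀ l x y : ℝ, F (l^p * x) (l^q * y) = l^k * F x y) (l x y : ℝ) :
    l^p * fderiv ℝ (fun z : ℝ × ℝ => F z.1 z.2) (l^p*x, l^q*y) (1,0)
      = l^k * fderiv ℝ (fun z : ℝ × ℝ => F z.1 z.2) (x,y) (1,0) := by
  have hc : HasDerivAt (fun u : ℝ => (l^p*u, l^q*y)) ((l^p : ℝ), (0:ℝ)) x := by
    have h1 : HasDerivAt (fun u : ℝ => l^p*u) (l^p : ℝ) x := by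
      simpa using (hasDerivAt_id x).const_mul (l^p)
    exact h1.prodMk (hasDerivAt_const x _)
  have h1 : HasDerivAt (fun u : ℝ => F (l^p*u) (l^q*y))
      (l^p * fderiv ℝ (fun z : ℝ × ℝ => F z.1 z.2) (l^p*x, l^q*y) (1,0)) x := by
    have h := (hasFDerivAt_unc hF (l^p*x, l^q*y)).comp_hasDerivAt x hc
    rw [clm_eval] at h
    simpa [Function.comp_def] using h
  have h2 : HasDerivAt (fun u : ℝ => F (l^p*u) (l^q*y))
      (l^k * fderiv ℝ (fun z : ℝ × ℝ => F z.1 z.2) (x,y) (1,0)) x := by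
    have hfun : (fun u : ℝ => F (l^p*u) (l^q*y)) = fun u : ℝ => l^k * F u y :=
      funext fun u => hqh l u y
    rw [hfun]
    exact (pdx hF x y).const_mul _
  exact h1.unique h2

private lemma scale_y (hF : ContDiff ℝ (⊤ : ℕ∞) (fun z : ℝ × ℝ => F z.1 z.2)) (p q k : ℕ)
    (hqh : ∀ l x y : ℝ, F (l^p * x) (l^q * y) = l^k * F x y) (l x y : ℝ) :
    l^q * fderiv ℝ (fun z : ℝ × ℝ => F z.1 z.2) (l^p*x, l^q*y) (0,1)
      = l^k * fderiv ℝ (fun z : ℝ × ℝ => F z.1 z.2) (x,y) (0,1) := by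
  have hc : HasDerivAt (fun v : ℝ => (l^p*x, l^q*v)) ((0:ℝ), (l^q : ℝ)) y := by
    have h1 : HasDerivAt (fun v : ℝ => l^q*v) (l^q : ℝ) y := by
      simpa using (hasDerivAt_id y).const_mul (l^q)
    exact (hasDerivAt_const y _).prodMk h1
  have h1 : HasDerivAt (fun v : ℝ => F (l^p*x) (l^q*v))
      (l^q * fderiv ℝ (fun z : ℝ × ℝ => F z.1 z.2) (l^p*x, l^q*y) (0,1)) y := by
    have h := (hasFDerivAt_unc hF (l^p*x, l^q*y)).comp_hasDerivAt y hc
    rw [clm_eval] at h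
    simpa [Function.comp_def] using h
  have h2 : HasDerivAt (fun v : ℝ => F (l^p*x) (l^q*v))
      (l^k * fderiv ℝ (fun z : ℝ × ℝ => F z.1 z.2) (x,y) (0,1)) y := by
    have hfun : (fun v : ℝ => F (l^p*x) (l^q*v)) = fun v : ℝ => l^k * F x v :=
      funext fun v => hqh l x v
    rw [hfun]
    exact (pdy hF x y).const_mul _
  exact h1.unique h2


private lemma comp_curve (hF : ContDiff ℝ (⊤ : ℕ∞) (fun z : ℝ × ℝ => F z.1 z.2))
    {γ : ℝ → ℝ×ℝ} {V : ℝ×ℝ} {t : ℝ} (hγ : HasDerivAt γ V t) :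
    HasDerivAt (fun t => F (γ t).1 (γ t).2)
      (V.1 * fderiv ℝ (fun z : ℝ × ℝ => F z.1 z.2) (γ t) (1,0)
        + V.2 * fderiv ℝ (fun z : ℝ × ℝ => F z.1 z.2) (γ t) (0,1)) t := by
  have h := (hasFDerivAt_unc hF (γ t)).comp_hasDerivAt t hγ
  rwa [clm_eval] at h


private lemma euler_id (hF : ContDiff ℝ (⊤ : ℕ∞) (fun z : ℝ × ℝ => F z.1 z.2)) (p q k : ℕ)
    (hqh : ∀ l x y : ℝ, F (l^p * x) (l^q * y) = l^k * F x y) (x y : ℝ) :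
    (p:ℝ) * x * (fderiv ℝ (fun z : ℝ × ℝ => F z.1 z.2) (x,y) (1,0))
      + (q:ℝ) * y * (fderiv ℝ (fun z : ℝ × ℝ => F z.1 z.2) (x,y) (0,1)) = (k:ℝ) * F x y := by
  have hx : HasDerivAt (fun l : ℝ => l^p * x) ((p:ℝ)*x) 1 := by
    simpa using (hasDerivAt_pow p 1).mul_const x
  have hy : HasDerivAt (fun l : ℝ => l^q * y) ((q:ℝ)*y) 1 := by
    simpa using (hasDerivAt_pow q 1).mul_const y
  have h2 : HasDerivAt (fun l : ℝ => F (l^p * x) (l^q * y))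
      (fderiv ℝ (fun z : ℝ × ℝ => F z.1 z.2) (x,y) ((p:ℝ)*x, (q:ℝ)*y)) 1 := by
    have h := (hasFDerivAt_unc hF ((1:ℝ)^p * x, (1:ℝ)^q * y)).comp_hasDerivAt 1 (hx.prodMk hy)
    simpa [Function.comp_def] using h
  have h3 : HasDerivAt (fun l : ℝ => F (l^p * x) (l^q * y)) ((k:ℝ) * F x y) 1 := by
    have hfun : (fun l : ℝ => F (l^p * x) (l^q * y)) = fun l : ℝ => l^k * F x y :=
      funext fun l => hqh l x y
    rw [hfun]
    simpa using (hasDerivAt_pow k 1).mul_const (F x y)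
  have h4 := h2.unique h3
  rw [clm_eval] at h4
  simpa using h4

end auxcal

private lemma polar_rep (p q : ℕ) (hp : 0 < p) (hq : 0 < q) (z : ℝ × ℝ) (hz : z ≠ 0) :
    ∃ r θ : ℝ, 0 < r ∧ z.1 = r^p * Real.cos θ ∧ z.2 = r^q * Real.sin θ := by
  have hz' : z.1 ≠ 0 ∨ z.2 ≠ 0 := by
    by_contra h
    push_neg at h
    exact hz (Prod.ext h.1 h.2)
  set f : ℝ → ℝ := fun r => z.1^2 * r^(2*q) + z.2^2 * r^(2*p) - r^(2*(p+q)) with hf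
  have hfc : Continuous f := by fun_prop
  set a : ℝ := max |z.1| |z.2| with ha
  have ha0 : 0 < a := by
    rcases hz' with h | h
    · exact lt_max_of_lt_left (abs_pos.mpr h)
    · exact lt_max_of_lt_right (abs_pos.mpr h)
  set r₀ : ℝ := min (1/2) (a/2) with hr₀
  have hr₀0 : 0 < r₀ := lt_min (by norm_num) (by linarith)
  have hr₀1 : r₀ ≤ 1/2 := min_le_left _ _
  have hfr₀ : 0 < f r₀ := by
    have h2p : r₀^(2*p) ≤ r₀^2 := pow_le_pow_of_le_one hr₀0.le (by linarith) (by omega)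
    have h2q : r₀^(2*q) ≤ r₀^2 := pow_le_pow_of_le_one hr₀0.le (by linarith) (by omega)
    have hppos : (0:ℝ) < r₀^(2*p) := pow_pos hr₀0 _
    have hqpos : (0:ℝ) < r₀^(2*q) := pow_pos hr₀0 _
    have hra : r₀ < a := lt_of_le_of_lt (min_le_right _ _) (by linarith)
    have key : r₀^2 < a^2 := by nlinarith
    rcases max_cases |z.1| |z.2| with ⟨hmax, _⟩ | ⟨hmax, _⟩
    · have : r₀^2 < z.1^2 := by rw [← sq_abs z.1, ← hmax]; exact key
      have : r₀^(2*p) < z.1^2 := lt_of_le_of_lt h2p this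
      have hsplit : r₀^(2*(p+q)) = r₀^(2*p) * r₀^(2*q) := by ring
      rw [hf]
      simp only
      rw [hsplit]
      nlinarith [sq_nonneg z.2, mul_pos hppos hqpos]
    · have : r₀^2 < z.2^2 := by rw [← sq_abs z.2, ← hmax]; exact key
      have : r₀^(2*q) < z.2^2 := lt_of_le_of_lt h2q this
      have hsplit : r₀^(2*(p+q)) = r₀^(2*p) * r₀^(2*q) := by ring
      rw [hf]; simp only
      rw [hsplit]
      nlinarith [sq_nonneg z.1, mul_pos hppos hqpos]
  set R : ℝ := 1 + z.1^2 + z.2^2 with hR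
  have hR1 : (1:ℝ) ≤ R := by nlinarith [sq_nonneg z.1, sq_nonneg z.2]
  have hfR : f R < 0 := by
    have h1 : R^(2*q) ≤ R^(2*(p+q)-2) := pow_le_pow_right₀ hR1 (by omega)
    have h2 : R^(2*p) ≤ R^(2*(p+q)-2) := pow_le_pow_right₀ hR1 (by omega)
    have h3 : R^(2*(p+q)) = R^2 * R^(2*(p+q)-2) := by
      rw [← pow_add]; congr 1; omega
    have h4 : (0:ℝ) < R^(2*(p+q)-2) := pow_pos (by linarith) _
    have h5 : z.1^2 + z.2^2 < R^2 := by nlinarith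
    rw [hf]; simp only
    rw [h3]
    nlinarith [sq_nonneg z.1, sq_nonneg z.2]
  have hr₀R : r₀ ≤ R := by linarith
  obtain ⟨r, hrmem, hfr⟩ := intermediate_value_Icc' hr₀R hfc.continuousOn
    (Set.mem_Icc.mpr ⟨hfR.le, hfr₀.le⟩)
  have hr0 : 0 < r := lt_of_lt_of_le hr₀0 hrmem.1
  have hrp : (r:ℝ)^p ≠ 0 := (pow_pos hr0 p).ne'
  have hrq : (r:ℝ)^q ≠ 0 := (pow_pos hr0 q).ne'
  set A : ℝ := z.1 / r^p with hA
  set B : ℝ := z.2 / r^q with hB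
  have hAB : A^2 + B^2 = 1 := by
    rw [hA, hB]
    have hfr' : z.1^2 * r^(2*q) + z.2^2 * r^(2*p) - r^(2*(p+q)) = 0 := hfr
    field_simp
    have e1 : r^(2*q) = (r^q)^2 := by rw [show 2*q = q*2 by ring, pow_mul]
    have e2 : r^(2*p) = (r^p)^2 := by rw [show 2*p = p*2 by ring, pow_mul]
    have e3 : r^(2*(p+q)) = (r^p)^2 * (r^q)^2 := by
      rw [show 2*(p+q) = (p+q)*2 by ring, pow_mul, pow_add, mul_pow]
    linear_combination hfr' - (e1 - (r^q)^2) * z.1^2 - (e2 - (r^p)^2) * z.2^2 + e3 - (r^p)^2*(r^q)^2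
  have hA1 : -1 ≤ A ∧ A ≤ 1 := by constructor <;> nlinarith [sq_nonneg B]
  have hsin : Real.sin (Real.arccos A) = |B| := by
    rw [Real.sin_arccos]
    have : 1 - A^2 = B^2 := by linarith
    rw [this, Real.sqrt_sq_eq_abs]
  rcases le_or_gt 0 B with hBpos | hBneg
  · refine ⟨r, Real.arccos A, hr0, ?_, ?_⟩
    · rw [Real.cos_arccos hA1.1 hA1.2, hA]; field_simp
    · rw [hsin, abs_of_nonneg hBpos, hB]; field_simp
  · refine ⟨r, -Real.arccos A, hr0, ?_, ?_⟩
    · rw [Real.cos_neg, Real.cos_arccos hA1.1 hA1.2, hA]; field_simp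
    · rw [Real.sin_neg, hsin, abs_of_neg hBneg, hB]; field_simp

private lemma keyAlg (P Q Nr Mr r c s A B Cm Dn : ℝ)
    (pn qn pm qm pnx pny qnx qny pmx pmy qmx qmy : ℝ)
    (PnZ QnZ PmZ QmZ PnxZ PnyZ QnxZ QnyZ PmxZ PmyZ QmxZ QmyZ : ℝ)
    (hE1 : P*c*pnx + Q*s*pny = (P+Nr-1)*pn)
    (hE2 : P*c*qnx + Q*s*qny = (Q+Nr-1)*qn)
    (hE3 : P*c*pmx + Q*s*pmy = (P+Mr-1)*pm)
    (hE4 : P*c*qmx + Q*s*qmy = (Q+Mr-1)*qm)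
    (hv1 : PnZ = A*Dn*pn) (hv2 : QnZ = B*Dn*qn) (hv3 : PmZ = A*Cm*r*pm) (hv4 : QmZ = B*Cm*r*qm)
    (hs1 : A*r*PnxZ = A*Dn*pnx) (hs2 : B*r*PnyZ = A*Dn*pny)
    (hs3 : A*r*QnxZ = B*Dn*qnx) (hs4 : B*r*QnyZ = B*Dn*qny)
    (hs5 : A*r*PmxZ = A*Cm*r*pmx) (hs6 : B*r*PmyZ = A*Cm*r*pmy)
    (hs7 : A*r*QmxZ = B*Cm*r*qmx) (hs8 : B*r*QmyZ = B*Cm*r*qmy) :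
    ((P*(A*r*c)*QmZ - Q*(B*r*s)*PmZ) * (PnxZ + PmxZ + QnyZ + QmyZ)
      - ((P*QmZ + P*(A*r*c)*QmxZ - Q*(B*r*s)*PmxZ)*(PnZ+PmZ)
         + (P*(A*r*c)*QmyZ - Q*PmZ - Q*(B*r*s)*PmyZ)*(QnZ+QmZ)))
     * ((P*c^2+Q*s^2) * (A*B*r^2))
    = -(A^2*B^2*Cm*Dn*r^3 *
        ((Mr-Nr)*(c*pn+s*qn)*(P*c*qm-Q*s*pm)
         - (-(P*s*qn) + P*c*(-(s*qnx)+c*qny) - Q*c*pn - Q*s*(-(s*pnx)+c*pny))*(P*c*qm-Q*s*pm)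
         + (P*c*qn-Q*s*pn)*(-(P*s*qm) + P*c*(-(s*qmx)+c*qmy) - Q*c*pm - Q*s*(-(s*pmx)+c*pmy)))) := by
  subst hv1 hv2 hv3 hv4
  linear_combination
      (A*B^2*Cm*r^3*(P*c^2+Q*s^2)*(P*c*qm - Q*s*pm)) * hs1 +
      (A^2*B*Cm*r^3*(P*c^2+Q*s^2)*(P*c*qm - Q*s*pm)) * hs4 +
      (A*B^2*r^2*(P*c^2+Q*s^2)*(Q*s*Dn*pn + P*c*Cm*r*qm)) * hs5 +
      (A*B^2*r^2*(P*c^2+Q*s^2)*Q*s*(Dn*qn + Cm*r*qm)) * hs6 +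
      (-(A^2*B*r^2*(P*c^2+Q*s^2)*P*c*(Dn*pn + Cm*r*pm))) * hs7 +
      (-(A^2*B*r^2*(P*c^2+Q*s^2)*(P*c*Dn*qn + Q*s*Cm*r*pm))) * hs8 +
      (A^2*B^2*Cm*Dn*r^3*c*(P*c*qm - Q*s*pm)) * hE1 +
      (A^2*B^2*Cm*Dn*r^3*s*(P*c*qm - Q*s*pm)) * hE2 +
      (A^2*B^2*Cm*Dn*r^3*Q*s*(c*pn+s*qn) + A^2*B^2*Cm^2*r^4*(P*c^2+Q*s^2)*qm) * hE3 +
      (-(A^2*B^2*Cm*Dn*r^3*P*c*(c*pn+s*qn) + A^2*B^2*Cm^2*r^4*(P*c^2+Q*s^2)*pm)) * hE4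

end StmtAux

/-- stability of the limit cycle.  Under the hypotheses of Theorem 1
(`bₘ ≠ 0` everywhere, `Φ = aₙ/bₘ − (bₙ/bₘ)'`), if `bₘΦ > 0` everywhere then every
nonconstant periodic solution `γ` of `(x',y') = Xₙ + Xₘ` with period `T > 0` satisfies
`∫₀ᵀ div(Xₙ + Xₘ)(γ(t)) dt < 0` (hyperbolic stable limit cycle), while if `bₘΦ < 0`
everywhere then `∫₀ᵀ div(Xₙ + Xₘ)(γ(t)) dt > 0` (hyperbolic unstable). -/
theorem stmt_1 (p q : ℕ) (hp : 0 < p) (hq : 0 < q) (n m : ℕ) (hnm : n < m)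
    (Pn Qn Pm Qm : ℝ → ℝ → ℝ)
    (hPn : ContDiff ℝ (⊤ : ℕ∞) (fun z : ℝ × ℝ => Pn z.1 z.2))
    (hQn : ContDiff ℝ (⊤ : ℕ∞) (fun z : ℝ × ℝ => Qn z.1 z.2))
    (hPm : ContDiff ℝ (⊤ : ℕ∞) (fun z : ℝ × ℝ => Pm z.1 z.2))
    (hQm : ContDiff ℝ (⊤ : ℕ∞) (fun z : ℝ × ℝ => Qm z.1 z.2))
    (hqhPn : ∀ l x y : ℝ, Pn (l ^ p * x) (l ^ q * y) = l ^ (p + n - 1) * Pn x y)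
    (hqhQn : ∀ l x y : ℝ, Qn (l ^ p * x) (l ^ q * y) = l ^ (q + n - 1) * Qn x y)
    (hqhPm : ∀ l x y : ℝ, Pm (l ^ p * x) (l ^ q * y) = l ^ (p + m - 1) * Pm x y)
    (hqhQm : ∀ l x y : ℝ, Qm (l ^ p * x) (l ^ q * y) = l ^ (q + m - 1) * Qm x y)
    (an bn bm : ℝ → ℝ)
    (han : ∀ θ : ℝ, an θ = ((m : ℝ) - n) *
      (Real.cos θ * Pn (Real.cos θ) (Real.sin θ) + Real.sin θ * Qn (Real.cos θ) (Real.sin θ)))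
    (hbn : ∀ θ : ℝ, bn θ = (p : ℝ) * Real.cos θ * Qn (Real.cos θ) (Real.sin θ)
      - (q : ℝ) * Real.sin θ * Pn (Real.cos θ) (Real.sin θ))
    (hbm : ∀ θ : ℝ, bm θ = (p : ℝ) * Real.cos θ * Qm (Real.cos θ) (Real.sin θ)
      - (q : ℝ) * Real.sin θ * Pm (Real.cos θ) (Real.sin θ))
    (hbm0 : ∀ θ : ℝ, bm θ ≠ 0)
    (Φ : ℝ → ℝ)
    (hΦ : ∀ θ : ℝ, Φ θ = an θ / bm θ - deriv (fun u : ℝ => bn u / bm u) θ)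
    (γ : ℝ → ℝ × ℝ)
    (hγ : ∀ t : ℝ, HasDerivAt γ
      (Pn (γ t).1 (γ t).2 + Pm (γ t).1 (γ t).2,
       Qn (γ t).1 (γ t).2 + Qm (γ t).1 (γ t).2) t)
    (T : ℝ) (hT : 0 < T) (hper : ∀ t : ℝ, γ (t + T) = γ t)
    (hnc : ∃ t s : ℝ, γ t ≠ γ s) :
    ((∀ θ : ℝ, 0 < bm θ * Φ θ) →
      (∫ t in (0:ℝ)..T,
        (deriv (fun u : ℝ => Pn u (γ t).2 + Pm u (γ t).2) (γ t).1
          + deriv (fun v : ℝ => Qn (γ t).1 v + Qm (γ t).1 v) (γ t).2)) < 0) ∧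
    ((∀ θ : ℝ, bm θ * Φ θ < 0) →
      0 < ∫ t in (0:ℝ)..T,
        (deriv (fun u : ℝ => Pn u (γ t).2 + Pm u (γ t).2) (γ t).1
          + deriv (fun v : ℝ => Qn (γ t).1 v + Qm (γ t).1 v) (γ t).2)) := by

  have hm0 : 0 < m := Nat.lt_of_le_of_lt (Nat.zero_le n) hnm
  obtain ⟨p', rfl⟩ : ∃ p'', p = p'' + 1 := ⟨p - 1, by omega⟩
  obtain ⟨q', rfl⟩ : ∃ q'', q = q'' + 1 := ⟨q - 1, by omega⟩
  obtain ⟨m', rfl⟩ : ∃ m'', m = m'' + 1 := ⟨m - 1, by omega⟩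
  have hqhPn' : ∀ l x y : ℝ, Pn (l ^ (p'+1) * x) (l ^ (q'+1) * y) = l ^ (p'+n) * Pn x y := by
    intro l x y; have h := hqhPn l x y
    rwa [show p' + 1 + n - 1 = p' + n from by omega] at h
  have hqhQn' : ∀ l x y : ℝ, Qn (l ^ (p'+1) * x) (l ^ (q'+1) * y) = l ^ (q'+n) * Qn x y := by
    intro l x y; have h := hqhQn l x y
    rwa [show q' + 1 + n - 1 = q' + n from by omega] at h
  have hqhPm' : ∀ l x y : ℝ, Pm (l ^ (p'+1) * x) (l ^ (q'+1) * y) = l ^ (p'+m'+1) * Pm x y := by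
    intro l x y; have h := hqhPm l x y
    rwa [show p' + 1 + (m' + 1) - 1 = p' + m' + 1 from by omega] at h
  have hqhQm' : ∀ l x y : ℝ, Qm (l ^ (p'+1) * x) (l ^ (q'+1) * y) = l ^ (q'+m'+1) * Qm x y := by
    intro l x y; have h := hqhQm l x y
    rwa [show q' + 1 + (m' + 1) - 1 = q' + m' + 1 from by omega] at h
  have hγc : Continuous γ := continuous_iff_continuousAt.mpr fun t => (hγ t).continuousAt
  set d : ℝ → ℝ := fun t => (fderiv ℝ (fun z : ℝ × ℝ => Pn z.1 z.2) (γ t) (1,0) + fderiv ℝ (fun z : ℝ × ℝ => Pm z.1 z.2) (γ t) (1,0)) + (fderiv ℝ (fun z : ℝ × ℝ => Qn z.1 z.2) (γ t) (0,1) + fderiv ℝ (fun z : ℝ × ℝ => Qm z.1 z.2) (γ t) (0,1)) with hddef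
  have hdeq : ∀ t : ℝ, (deriv (fun u : ℝ => Pn u (γ t).2 + Pm u (γ t).2) (γ t).1
      + deriv (fun v : ℝ => Qn (γ t).1 v + Qm (γ t).1 v) (γ t).2) = d t := by
    intro t
    have ha := (pdx hPn (γ t).1 (γ t).2).add (pdx hPm (γ t).1 (γ t).2)
    have hb := (pdy hQn (γ t).1 (γ t).2).add (pdy hQm (γ t).1 (γ t).2)
    rw [Prod.mk.eta] at ha hb
    simp only [Pi.add_def] at ha hb
    rw [ha.deriv, hb.deriv, hddef]
  set u : ℝ → ℝ := fun t => (↑(p'+1):ℝ) * ((γ t).1 * Qm (γ t).1 (γ t).2) - (↑(q'+1):ℝ) * ((γ t).2 * Pm (γ t).1 (γ t).2) with hudef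
  set u' : ℝ → ℝ := fun t =>
      (↑(p'+1):ℝ) * ((Pn (γ t).1 (γ t).2 + Pm (γ t).1 (γ t).2) * Qm (γ t).1 (γ t).2 + (γ t).1 * ((Pn (γ t).1 (γ t).2 + Pm (γ t).1 (γ t).2) * (fderiv ℝ (fun z : ℝ × ℝ => Qm z.1 z.2) (γ t) (1,0)) + (Qn (γ t).1 (γ t).2 + Qm (γ t).1 (γ t).2) * (fderiv ℝ (fun z : ℝ × ℝ => Qm z.1 z.2) (γ t) (0,1))))
    - (↑(q'+1):ℝ) * ((Qn (γ t).1 (γ t).2 + Qm (γ t).1 (γ t).2) * Pm (γ t).1 (γ t).2 + (γ t).2 * ((Pn (γ t).1 (γ t).2 + Pm (γ t).1 (γ t).2) * (fderiv ℝ (fun z : ℝ × ℝ => Pm z.1 z.2) (γ t) (1,0)) + (Qn (γ t).1 (γ t).2 + Qm (γ t).1 (γ t).2) * (fderiv ℝ (fun z : ℝ × ℝ => Pm z.1 z.2) (γ t) (0,1)))) with hu'def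
  have hu : ∀ t : ℝ, HasDerivAt u (u' t) t := by
    intro t
    have h1 : HasDerivAt (fun s => (γ s).1) (Pn (γ t).1 (γ t).2 + Pm (γ t).1 (γ t).2) t := by
      simpa [Function.comp_def] using ((ContinuousLinearMap.fst ℝ ℝ ℝ).hasFDerivAt.comp_hasDerivAt t (hγ t))
    have h2 : HasDerivAt (fun s => (γ s).2) (Qn (γ t).1 (γ t).2 + Qm (γ t).1 (γ t).2) t := by
      simpa [Function.comp_def] using ((ContinuousLinearMap.snd ℝ ℝ ℝ).hasFDerivAt.comp_hasDerivAt t (hγ t))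
    have hQmc : HasDerivAt (fun s => Qm (γ s).1 (γ s).2)
        ((Pn (γ t).1 (γ t).2 + Pm (γ t).1 (γ t).2) * (fderiv ℝ (fun z : ℝ × ℝ => Qm z.1 z.2) (γ t) (1,0)) + (Qn (γ t).1 (γ t).2 + Qm (γ t).1 (γ t).2) * (fderiv ℝ (fun z : ℝ × ℝ => Qm z.1 z.2) (γ t) (0,1))) t := comp_curve hQm (hγ t)
    have hPmc : HasDerivAt (fun s => Pm (γ s).1 (γ s).2)
        ((Pn (γ t).1 (γ t).2 + Pm (γ t).1 (γ t).2) * (fderiv ℝ (fun z : ℝ × ℝ => Pm z.1 z.2) (γ t) (1,0)) + (Qn (γ t).1 (γ t).2 + Qm (γ t).1 (γ t).2) * (fderiv ℝ (fun z : ℝ × ℝ => Pm z.1 z.2) (γ t) (0,1))) t := comp_curve hPm (hγ t)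
    rw [hudef, hu'def]
    exact ((h1.mul hQmc).const_mul _).sub ((h2.mul hPmc).const_mul _)
  set e : ℝ → ℝ := fun t => u t * d t - u' t with hedef
  have hPnvc : Continuous (fun t => Pn (γ t).1 (γ t).2) := hPn.continuous.comp hγc
  have hQnvc : Continuous (fun t => Qn (γ t).1 (γ t).2) := hQn.continuous.comp hγc
  have hPmvc : Continuous (fun t => Pm (γ t).1 (γ t).2) := hPm.continuous.comp hγc
  have hQmvc : Continuous (fun t => Qm (γ t).1 (γ t).2) := hQm.continuous.comp hγc
  have hγ1c : Continuous (fun t => (γ t).1) := continuous_fst.comp hγc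
  have hγ2c : Continuous (fun t => (γ t).2) := continuous_snd.comp hγc
  have hPnxc : Continuous (fun t => fderiv ℝ (fun z : ℝ × ℝ => Pn z.1 z.2) (γ t) (1,0)) :=
    ((hPn.continuous_fderiv (by simp)).clm_apply continuous_const).comp hγc
  have hPmxc : Continuous (fun t => fderiv ℝ (fun z : ℝ × ℝ => Pm z.1 z.2) (γ t) (1,0)) :=
    ((hPm.continuous_fderiv (by simp)).clm_apply continuous_const).comp hγc
  have hQnyc : Continuous (fun t => fderiv ℝ (fun z : ℝ × ℝ => Qn z.1 z.2) (γ t) (0,1)) :=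
    ((hQn.continuous_fderiv (by simp)).clm_apply continuous_const).comp hγc
  have hQmyc : Continuous (fun t => fderiv ℝ (fun z : ℝ × ℝ => Qm z.1 z.2) (γ t) (0,1)) :=
    ((hQm.continuous_fderiv (by simp)).clm_apply continuous_const).comp hγc
  have hPmyc : Continuous (fun t => fderiv ℝ (fun z : ℝ × ℝ => Pm z.1 z.2) (γ t) (0,1)) :=
    ((hPm.continuous_fderiv (by simp)).clm_apply continuous_const).comp hγc
  have hQmxc : Continuous (fun t => fderiv ℝ (fun z : ℝ × ℝ => Qm z.1 z.2) (γ t) (1,0)) :=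
    ((hQm.continuous_fderiv (by simp)).clm_apply continuous_const).comp hγc
  have hdc : Continuous d := by
    rw [hddef]; exact (hPnxc.add hPmxc).add (hQnyc.add hQmyc)
  have hX1c : Continuous (fun t => (Pn (γ t).1 (γ t).2 + Pm (γ t).1 (γ t).2)) := hPnvc.add hPmvc
  have hX2c : Continuous (fun t => (Qn (γ t).1 (γ t).2 + Qm (γ t).1 (γ t).2)) := hQnvc.add hQmvc
  have huc : Continuous u := by
    rw [hudef]
    exact (continuous_const.mul (hγ1c.mul hQmvc)).sub (continuous_const.mul (hγ2c.mul hPmvc))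
  have hu'c : Continuous u' := by
    rw [hu'def]
    exact (continuous_const.mul ((hX1c.mul hQmvc).add (hγ1c.mul ((hX1c.mul hQmxc).add (hX2c.mul hQmyc))))).sub
      (continuous_const.mul ((hX2c.mul hPmvc).add (hγ2c.mul ((hX1c.mul hPmxc).add (hX2c.mul hPmyc)))))
  have hec : Continuous e := by
    rw [hedef]; exact (huc.mul hdc).sub hu'c
  have hPm00 : Pm 0 0 = 0 := by
    have h := hqhPm' 0 1 1
    rw [zero_pow (by omega : p' + 1 ≠ 0), zero_pow (by omega : q' + 1 ≠ 0),
      zero_pow (by omega : p' + m' + 1 ≠ 0)] at h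
    simpa using h
  have hQm00 : Qm 0 0 = 0 := by
    have h := hqhQm' 0 1 1
    rw [zero_pow (by omega : p' + 1 ≠ 0), zero_pow (by omega : q' + 1 ≠ 0),
      zero_pow (by omega : q' + m' + 1 ≠ 0)] at h
    simpa using h
  have hu0 : ∀ t : ℝ, γ t = 0 → u t = 0 := by
    intro t h0
    simp only [hudef, h0]
    simp [hPm00, hQm00]
  have he0 : ∀ t : ℝ, γ t = 0 → e t = 0 := by
    intro t h0
    have hu0' := hu0 t h0
    simp only [hedef, hu'def, h0, hu0']
    simp [hPm00, hQm00]
  have hbmc : Continuous bm := by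
    have hbmfun : bm = fun θ0 => (↑(p'+1):ℝ) * (Real.cos θ0) * Qm (Real.cos θ0) (Real.sin θ0) - (↑(q'+1):ℝ) * (Real.sin θ0) * Pm (Real.cos θ0) (Real.sin θ0) := funext hbm
    rw [hbmfun]
    exact ((continuous_const.mul Real.continuous_cos).mul
        (hQm.continuous.comp (Real.continuous_cos.prodMk Real.continuous_sin))).sub
      ((continuous_const.mul Real.continuous_sin).mul
        (hPm.continuous.comp (Real.continuous_cos.prodMk Real.continuous_sin)))
  obtain ⟨ε, hεpm, hbmε⟩ : ∃ ε : ℝ, (ε = 1 ∨ ε = -1) ∧ ∀ θ0 : ℝ, 0 < ε * bm θ0 := by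
    rcases lt_or_gt_of_ne (hbm0 0) with hneg | hpos
    · refine ⟨-1, Or.inr rfl, fun θ0 => ?_⟩
      rcases lt_or_gt_of_ne (hbm0 θ0) with h | h
      · linarith
      · exfalso
        obtain ⟨c0, -, hc0⟩ := intermediate_value_uIcc (a := (0:ℝ)) (b := θ0) (f := bm)
          hbmc.continuousOn (Set.mem_uIcc.mpr (Or.inl ⟨hneg.le, h.le⟩))
        exact hbm0 c0 hc0
    · refine ⟨1, Or.inl rfl, fun θ0 => ?_⟩
      rcases lt_or_gt_of_ne (hbm0 θ0) with h | h
      · exfalso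
        obtain ⟨c0, -, hc0⟩ := intermediate_value_uIcc (a := θ0) (b := (0:ℝ)) (f := bm)
          hbmc.continuousOn (Set.mem_uIcc.mpr (Or.inl ⟨h.le, hpos.le⟩))
        exact hbm0 c0 hc0
      · linarith
  have hΦsq : ∀ θ0 : ℝ, (bm θ0)^2 * Φ θ0 = (((↑(m'+1):ℝ) - (↑n:ℝ))*((Real.cos θ0)*Pn (Real.cos θ0) (Real.sin θ0) + (Real.sin θ0)*Qn (Real.cos θ0) (Real.sin θ0))*((↑(p'+1):ℝ)*(Real.cos θ0)*Qm (Real.cos θ0) (Real.sin θ0) - (↑(q'+1):ℝ)*(Real.sin θ0)*Pm (Real.cos θ0) (Real.sin θ0)) - (-((↑(p'+1):ℝ)*(Real.sin θ0)*Qn (Real.cos θ0) (Real.sin θ0)) + (↑(p'+1):ℝ)*(Real.cos θ0)*(-((Real.sin θ0)*(fderiv ℝ (fun z : ℝ × ℝ => Qn z.1 z.2) ((Real.cos θ0), (Real.sin θ0)) (1,0))) + (Real.cos θ0)*(fderiv ℝ (fun z : ℝ × ℝ => Qn z.1 z.2) ((Real.cos θ0), (Real.sin θ0)) (0,1))) -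 (↑(q'+1):ℝ)*(Real.cos θ0)*Pn (Real.cos θ0) (Real.sin θ0) - (↑(q'+1):ℝ)*(Real.sin θ0)*(-((Real.sin θ0)*(fderiv ℝ (fun z : ℝ × ℝ => Pn z.1 z.2) ((Real.cos θ0), (Real.sin θ0)) (1,0))) + (Real.cos θ0)*(fderiv ℝ (fun z : ℝ × ℝ => Pn z.1 z.2) ((Real.cos θ0), (Real.sin θ0)) (0,1))))*((↑(p'+1):ℝ)*(Real.cos θ0)*Qm (Real.cos θ0) (Real.sin θ0) - (↑(q'+1):ℝ)*(Real.sin θ0)*Pm (Real.cos θ0) (Real.sin θ0)) + ((↑(p'+1):ℝ)*(Real.cos θ0)*Qn (Real.cos θ0) (Real.sin θ0) - (↑(q'+1):ℝ)*(Real.sin θ0)*Pn (Real.cos θ0) (Real.sin θ0))*(-((↑(p'+1):ℝ)*(Real.sin θ0)*Qm (Real.cos θ0) (Real.sin θ0)) + (↑(p'+1):ℝ)*(Real.cos θ0)*(-((Real.sin θ0)*(fderiv ℝ (fun z : ℝ × ℝ => Qm z.1 z.2) ((Real.cos θ0), (Real.sin θ0)) (1,0))) + (Real.cos θ0)*(fderiv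 ℝ (fun z : ℝ × ℝ => Qm z.1 z.2) ((Real.cos θ0), (Real.sin θ0)) (0,1))) - (↑(q'+1):ℝ)*(Real.cos θ0)*Pm (Real.cos θ0) (Real.sin θ0) - (↑(q'+1):ℝ)*(Real.sin θ0)*(-((Real.sin θ0)*(fderiv ℝ (fun z : ℝ × ℝ => Pm z.1 z.2) ((Real.cos θ0), (Real.sin θ0)) (1,0))) + (Real.cos θ0)*(fderiv ℝ (fun z : ℝ × ℝ => Pm z.1 z.2) ((Real.cos θ0), (Real.sin θ0)) (0,1))))) := by
    intro θ0
    have hcurve : HasDerivAt (fun θ => (Real.cos θ, Real.sin θ)) (-(Real.sin θ0), (Real.cos θ0)) θ0 :=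
      (Real.hasDerivAt_cos θ0).prodMk (Real.hasDerivAt_sin θ0)
    have hPnθ : HasDerivAt (fun θ => Pn (Real.cos θ) (Real.sin θ))
        (-(Real.sin θ0) * (fderiv ℝ (fun z : ℝ × ℝ => Pn z.1 z.2) ((Real.cos θ0), (Real.sin θ0)) (1,0)) + (Real.cos θ0) * (fderiv ℝ (fun z : ℝ × ℝ => Pn z.1 z.2) ((Real.cos θ0), (Real.sin θ0)) (0,1))) θ0 := comp_curve hPn hcurve
    have hQnθ : HasDerivAt (fun θ => Qn (Real.cos θ) (Real.sin θ))
        (-(Real.sin θ0) * (fderiv ℝ (fun z : ℝ × ℝ => Qn z.1 z.2) ((Real.cos θ0), (Real.sin θ0)) (1,0)) + (Real.cos θ0) * (fderiv ℝ (fun z : ℝ × ℝ => Qn z.1 z.2) ((Real.cos θ0), (Real.sin θ0)) (0,1))) θ0 := comp_curve hQn hcurve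
    have hPmθ : HasDerivAt (fun θ => Pm (Real.cos θ) (Real.sin θ))
        (-(Real.sin θ0) * (fderiv ℝ (fun z : ℝ × ℝ => Pm z.1 z.2) ((Real.cos θ0), (Real.sin θ0)) (1,0)) + (Real.cos θ0) * (fderiv ℝ (fun z : ℝ × ℝ => Pm z.1 z.2) ((Real.cos θ0), (Real.sin θ0)) (0,1))) θ0 := comp_curve hPm hcurve
    have hQmθ : HasDerivAt (fun θ => Qm (Real.cos θ) (Real.sin θ))
        (-(Real.sin θ0) * (fderiv ℝ (fun z : ℝ × ℝ => Qm z.1 z.2) ((Real.cos θ0), (Real.sin θ0)) (1,0)) + (Real.cos θ0) * (fderiv ℝ (fun z : ℝ × ℝ => Qm z.1 z.2) ((Real.cos θ0), (Real.sin θ0)) (0,1))) θ0 := comp_curve hQm hcurve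
    have hbnfun : bn = fun θ => (↑(p'+1):ℝ) * Real.cos θ * Qn (Real.cos θ) (Real.sin θ)
        - (↑(q'+1):ℝ) * Real.sin θ * Pn (Real.cos θ) (Real.sin θ) := funext hbn
    have hbmfun : bm = fun θ => (↑(p'+1):ℝ) * Real.cos θ * Qm (Real.cos θ) (Real.sin θ)
        - (↑(q'+1):ℝ) * Real.sin θ * Pm (Real.cos θ) (Real.sin θ) := funext hbm
    have hbnD : HasDerivAt bn ((↑(p'+1):ℝ) * -(Real.sin θ0) * Qn (Real.cos θ0) (Real.sin θ0) + (↑(p'+1):ℝ) * (Real.cos θ0) * (-(Real.sin θ0) * (fderiv ℝ (fun z : ℝ × ℝ => Qn z.1 z.2) ((Real.cos θ0), (Real.sin θ0)) (1,0)) + (Real.cos θ0) * (fderiv ℝ (fun z : ℝ × ℝ => Qn z.1 z.2) ((Real.cos θ0), (Real.sin θ0)) (0,1))) - ((↑(q'+1):ℝ) * (Real.cos θ0) * Pn (Real.cos θ0) (Real.sin θ0) + (↑(q'+1):ℝ) * (Real.sin θ0) * (-(Real.sin θ0) * (fderiv ℝ (fun z : ℝ × ℝ => Pn z.1 z.2)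 ((Real.cos θ0), (Real.sin θ0)) (1,0)) + (Real.cos θ0) * (fderiv ℝ (fun z : ℝ × ℝ => Pn z.1 z.2) ((Real.cos θ0), (Real.sin θ0)) (0,1))))) θ0 := by
      rw [hbnfun]
      exact (((Real.hasDerivAt_cos θ0).const_mul _).mul hQnθ).sub
        (((Real.hasDerivAt_sin θ0).const_mul _).mul hPnθ)
    have hbmD : HasDerivAt bm ((↑(p'+1):ℝ) * -(Real.sin θ0) * Qm (Real.cos θ0) (Real.sin θ0) + (↑(p'+1):ℝ) * (Real.cos θ0) * (-(Real.sin θ0) * (fderiv ℝ (fun z : ℝ × ℝ => Qm z.1 z.2) ((Real.cos θ0), (Real.sin θ0)) (1,0)) + (Real.cos θ0) * (fderiv ℝ (fun z : ℝ × ℝ => Qm z.1 z.2) ((Real.cos θ0), (Real.sin θ0)) (0,1))) - ((↑(q'+1):ℝ) * (Real.cos θ0) * Pm (Real.cos θ0) (Real.sin θ0) + (↑(q'+1):ℝ) * (Real.sin θ0) * (-(Real.sin θ0) * (fderiv ℝ (fun z : ℝ × ℝ => Pm z.1 z.2) ((Real.cos θ0), (Real.sin θ0)) (1,0)) + (Real.cos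 θ0) * (fderiv ℝ (fun z : ℝ × ℝ => Pm z.1 z.2) ((Real.cos θ0), (Real.sin θ0)) (0,1))))) θ0 := by
      rw [hbmfun]
      exact (((Real.hasDerivAt_cos θ0).const_mul _).mul hQmθ).sub
        (((Real.hasDerivAt_sin θ0).const_mul _).mul hPmθ)
    have hdvq := (hbnD.div hbmD (hbm0 θ0)).deriv
    have key0 : ∀ (B A G : ℝ), B ≠ 0 → B^2 * (A/B - G/B^2) = A*B - G := by
      intro B A G hB; field_simp [hB]
    simp only [Pi.div_def] at hdvq
    rw [hΦ θ0, hdvq, key0 _ _ _ (hbm0 θ0), han θ0, hbn θ0, hbm θ0]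
    ring
  have hE1c : ∀ θ0 : ℝ, (↑(p'+1):ℝ)*(Real.cos θ0)*(fderiv ℝ (fun z : ℝ × ℝ => Pn z.1 z.2) ((Real.cos θ0), (Real.sin θ0)) (1,0)) + (↑(q'+1):ℝ)*(Real.sin θ0)*(fderiv ℝ (fun z : ℝ × ℝ => Pn z.1 z.2) ((Real.cos θ0), (Real.sin θ0)) (0,1)) = ((↑(p'+1):ℝ) + (↑n:ℝ) - 1)*Pn (Real.cos θ0) (Real.sin θ0) := by
    intro θ0
    have h := euler_id hPn (p'+1) (q'+1) (p'+n) hqhPn' (Real.cos θ0) (Real.sin θ0)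
    push_cast at h ⊢
    linear_combination h
  have hE2c : ∀ θ0 : ℝ, (↑(p'+1):ℝ)*(Real.cos θ0)*(fderiv ℝ (fun z : ℝ × ℝ => Qn z.1 z.2) ((Real.cos θ0), (Real.sin θ0)) (1,0)) + (↑(q'+1):ℝ)*(Real.sin θ0)*(fderiv ℝ (fun z : ℝ × ℝ => Qn z.1 z.2) ((Real.cos θ0), (Real.sin θ0)) (0,1)) = ((↑(q'+1):ℝ) + (↑n:ℝ) - 1)*Qn (Real.cos θ0) (Real.sin θ0) := by
    intro θ0
    have h := euler_id hQn (p'+1) (q'+1) (q'+n) hqhQn' (Real.cos θ0) (Real.sin θ0)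
    push_cast at h ⊢
    linear_combination h
  have hE3c : ∀ θ0 : ℝ, (↑(p'+1):ℝ)*(Real.cos θ0)*(fderiv ℝ (fun z : ℝ × ℝ => Pm z.1 z.2) ((Real.cos θ0), (Real.sin θ0)) (1,0)) + (↑(q'+1):ℝ)*(Real.sin θ0)*(fderiv ℝ (fun z : ℝ × ℝ => Pm z.1 z.2) ((Real.cos θ0), (Real.sin θ0)) (0,1)) = ((↑(p'+1):ℝ) + (↑(m'+1):ℝ) - 1)*Pm (Real.cos θ0) (Real.sin θ0) := by
    intro θ0
    have h := euler_id hPm (p'+1) (q'+1) (p'+m'+1) hqhPm' (Real.cos θ0) (Real.sin θ0)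
    push_cast at h ⊢
    linear_combination h
  have hE4c : ∀ θ0 : ℝ, (↑(p'+1):ℝ)*(Real.cos θ0)*(fderiv ℝ (fun z : ℝ × ℝ => Qm z.1 z.2) ((Real.cos θ0), (Real.sin θ0)) (1,0)) + (↑(q'+1):ℝ)*(Real.sin θ0)*(fderiv ℝ (fun z : ℝ × ℝ => Qm z.1 z.2) ((Real.cos θ0), (Real.sin θ0)) (0,1)) = ((↑(q'+1):ℝ) + (↑(m'+1):ℝ) - 1)*Qm (Real.cos θ0) (Real.sin θ0) := by
    intro θ0
    have h := euler_id hQm (p'+1) (q'+1) (q'+m'+1) hqhQm' (Real.cos θ0) (Real.sin θ0)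
    push_cast at h ⊢
    linear_combination h
  have husign : ∀ t : ℝ, 0 ≤ ε * u t := by
    intro t
    by_cases h0 : γ t = 0
    · rw [hu0 t h0]; simp
    · obtain ⟨r, θ0, hr0, h1, h2⟩ := polar_rep (p'+1) (q'+1) (by omega) (by omega) (γ t) h0
      have huval : u t = r ^ (p'+q'+m'+2) * bm θ0 := by
        simp only [hudef]
        rw [h1, h2, hqhQm' r, hqhPm' r, hbm θ0]
        ring
      rw [huval]
      have h3 := hbmε θ0
      have h4 : (0:ℝ) < r ^ (p'+q'+m'+2) := pow_pos hr0 _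
      nlinarith
  have hesign : ∀ t : ℝ, γ t ≠ 0 → ∃ θ0 R : ℝ, 0 < R ∧
      e t = -(R * ((bm θ0)^2 * Φ θ0)) := by
    intro t h0
    obtain ⟨r, θ0, hr0, h1, h2⟩ := polar_rep (p'+1) (q'+1) (by omega) (by omega) (γ t) h0
    have hγt : γ t = (r ^ (p'+1) * Real.cos θ0, r ^ (q'+1) * Real.sin θ0) := Prod.ext h1 h2
    have hΔ : (0:ℝ) < (↑(p'+1):ℝ) * (Real.cos θ0)^2 + (↑(q'+1):ℝ) * (Real.sin θ0)^2 := by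
      have hcs := Real.sin_sq_add_cos_sq θ0
      have hp1 : (1:ℝ) ≤ (↑(p'+1):ℝ) := by exact_mod_cast Nat.one_le_iff_ne_zero.mpr (by omega)
      have hq1 : (1:ℝ) ≤ (↑(q'+1):ℝ) := by exact_mod_cast Nat.one_le_iff_ne_zero.mpr (by omega)
      nlinarith [sq_nonneg (Real.cos θ0), sq_nonneg (Real.sin θ0)]
    have hv1 : Pn (r ^ (p'+1) * Real.cos θ0) (r ^ (q'+1) * Real.sin θ0) = r^p' * r^n * Pn (Real.cos θ0) (Real.sin θ0) := by
      rw [hqhPn' r]; ring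
    have hv2 : Qn (r ^ (p'+1) * Real.cos θ0) (r ^ (q'+1) * Real.sin θ0) = r^q' * r^n * Qn (Real.cos θ0) (Real.sin θ0) := by
      rw [hqhQn' r]; ring
    have hv3 : Pm (r ^ (p'+1) * Real.cos θ0) (r ^ (q'+1) * Real.sin θ0) = r^p' * r^m' * r * Pm (Real.cos θ0) (Real.sin θ0) := by
      rw [hqhPm' r]; ring
    have hv4 : Qm (r ^ (p'+1) * Real.cos θ0) (r ^ (q'+1) * Real.sin θ0) = r^q' * r^m' * r * Qm (Real.cos θ0) (Real.sin θ0) := by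
      rw [hqhQm' r]; ring
    have hs1 : r^p' * r * (fderiv ℝ (fun z : ℝ × ℝ => Pn z.1 z.2) (r ^ (p'+1) * Real.cos θ0, r ^ (q'+1) * Real.sin θ0) (1,0)) = r^p' * r^n * (fderiv ℝ (fun z : ℝ × ℝ => Pn z.1 z.2) ((Real.cos θ0), (Real.sin θ0)) (1,0)) := by
      linear_combination scale_x hPn (p'+1) (q'+1) (p'+n) hqhPn' r (Real.cos θ0) (Real.sin θ0)
    have hs2 : r^q' * r * (fderiv ℝ (fun z : ℝ × ℝ => Pn z.1 z.2) (r ^ (p'+1) * Real.cos θ0, r ^ (q'+1) * Real.sin θ0) (0,1)) = r^p' * r^n * (fderiv ℝ (fun z : ℝ × ℝ => Pn z.1 z.2) ((Real.cos θ0), (Real.sin θ0)) (0,1)) := by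
      linear_combination scale_y hPn (p'+1) (q'+1) (p'+n) hqhPn' r (Real.cos θ0) (Real.sin θ0)
    have hs3 : r^p' * r * (fderiv ℝ (fun z : ℝ × ℝ => Qn z.1 z.2) (r ^ (p'+1) * Real.cos θ0, r ^ (q'+1) * Real.sin θ0) (1,0)) = r^q' * r^n * (fderiv ℝ (fun z : ℝ × ℝ => Qn z.1 z.2) ((Real.cos θ0), (Real.sin θ0)) (1,0)) := by
      linear_combination scale_x hQn (p'+1) (q'+1) (q'+n) hqhQn' r (Real.cos θ0) (Real.sin θ0)
    have hs4 : r^q' * r * (fderiv ℝ (fun z : ℝ × ℝ => Qn z.1 z.2) (r ^ (p'+1) * Real.cos θ0, r ^ (q'+1) * Real.sin θ0) (0,1)) = r^q' * r^n * (fderiv ℝ (fun z : ℝ × ℝ => Qn z.1 z.2) ((Real.cos θ0), (Real.sin θ0)) (0,1)) := by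
      linear_combination scale_y hQn (p'+1) (q'+1) (q'+n) hqhQn' r (Real.cos θ0) (Real.sin θ0)
    have hs5 : r^p' * r * (fderiv ℝ (fun z : ℝ × ℝ => Pm z.1 z.2) (r ^ (p'+1) * Real.cos θ0, r ^ (q'+1) * Real.sin θ0) (1,0)) = r^p' * r^m' * r * (fderiv ℝ (fun z : ℝ × ℝ => Pm z.1 z.2) ((Real.cos θ0), (Real.sin θ0)) (1,0)) := by
      linear_combination scale_x hPm (p'+1) (q'+1) (p'+m'+1) hqhPm' r (Real.cos θ0) (Real.sin θ0)
    have hs6 : r^q' * r * (fderiv ℝ (fun z : ℝ × ℝ => Pm z.1 z.2) (r ^ (p'+1) * Real.cos θ0, r ^ (q'+1) * Real.sin θ0) (0,1)) = r^p' * r^m' * r * (fderiv ℝ (fun z : ℝ × ℝ => Pm z.1 z.2) ((Real.cos θ0), (Real.sin θ0)) (0,1)) := by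
      linear_combination scale_y hPm (p'+1) (q'+1) (p'+m'+1) hqhPm' r (Real.cos θ0) (Real.sin θ0)
    have hs7 : r^p' * r * (fderiv ℝ (fun z : ℝ × ℝ => Qm z.1 z.2) (r ^ (p'+1) * Real.cos θ0, r ^ (q'+1) * Real.sin θ0) (1,0)) = r^q' * r^m' * r * (fderiv ℝ (fun z : ℝ × ℝ => Qm z.1 z.2) ((Real.cos θ0), (Real.sin θ0)) (1,0)) := by
      linear_combination scale_x hQm (p'+1) (q'+1) (q'+m'+1) hqhQm' r (Real.cos θ0) (Real.sin θ0)
    have hs8 : r^q' * r * (fderiv ℝ (fun z : ℝ × ℝ => Qm z.1 z.2) (r ^ (p'+1) * Real.cos θ0, r ^ (q'+1) * Real.sin θ0) (0,1)) = r^q' * r^m' * r * (fderiv ℝ (fun z : ℝ × ℝ => Qm z.1 z.2) ((Real.cos θ0), (Real.sin θ0)) (0,1)) := by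
      linear_combination scale_y hQm (p'+1) (q'+1) (q'+m'+1) hqhQm' r (Real.cos θ0) (Real.sin θ0)
    have hKEY : e t * (((↑(p'+1):ℝ) * (Real.cos θ0)^2 + (↑(q'+1):ℝ) * (Real.sin θ0)^2) * r ^ (p'+q'+2))
        = -(r ^ (2*p'+2*q'+m'+n+3) * ((bm θ0)^2 * Φ θ0)) := by
      rw [hΦsq θ0]
      simp only [hedef, hudef, hu'def, hddef]
      rw [h1, h2, hγt]
      linear_combination keyAlg (↑(p'+1):ℝ) (↑(q'+1):ℝ) (↑n:ℝ) (↑(m'+1):ℝ) r (Real.cos θ0) (Real.sin θ0) (r^p') (r^q') (r^m') (r^n)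
          _ _ _ _ _ _ _ _ _ _ _ _ _ _ _ _ _ _ _ _ _ _ _ _
          (hE1c θ0) (hE2c θ0) (hE3c θ0) (hE4c θ0) hv1 hv2 hv3 hv4 hs1 hs2 hs3 hs4 hs5 hs6 hs7 hs8
    refine ⟨θ0, r ^ (p'+q'+m'+n+1) * ((↑(p'+1):ℝ) * (Real.cos θ0)^2 + (↑(q'+1):ℝ) * (Real.sin θ0)^2)⁻¹,
      mul_pos (pow_pos hr0 _) (inv_pos.mpr hΔ), ?_⟩
    have hSne : (((↑(p'+1):ℝ) * (Real.cos θ0)^2 + (↑(q'+1):ℝ) * (Real.sin θ0)^2) * r ^ (p'+q'+2)) ≠ 0 :=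
      (mul_pos hΔ (pow_pos hr0 _)).ne'
    apply mul_right_cancel₀ hSne
    rw [hKEY]
    have hΔinv : ((↑(p'+1):ℝ) * (Real.cos θ0)^2 + (↑(q'+1):ℝ) * (Real.sin θ0)^2)
        * ((↑(p'+1):ℝ) * (Real.cos θ0)^2 + (↑(q'+1):ℝ) * (Real.sin θ0)^2)⁻¹ = 1 :=
      mul_inv_cancel₀ hΔ.ne'
    linear_combination (r ^ (2*p'+2*q'+m'+n+3) * ((bm θ0)^2 * Φ θ0)) * hΔinv
  set DD : ℝ → ℝ := fun t => ∫ s in (0:ℝ)..t, d s with hDdef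
  have hD : ∀ t : ℝ, HasDerivAt DD (d t) t := by
    intro t
    rw [hDdef]
    exact (hdc.integral_hasStrictDerivAt 0 t).hasDerivAt
  set v : ℝ → ℝ := fun t => ε * u t * Real.exp (-DD t) with hvdef
  have hv : ∀ t : ℝ, HasDerivAt v (-(ε * e t) * Real.exp (-DD t)) t := by
    intro t
    have hexp : HasDerivAt (fun s => Real.exp (-DD s)) (Real.exp (-DD t) * -d t) t :=
      ((hD t).neg).exp
    have h2 := ((hu t).const_mul ε).mul hexp
    have h3 : -(ε * e t) * Real.exp (-DD t)
        = ε * u' t * Real.exp (-DD t) + ε * u t * (Real.exp (-DD t) * -d t) := by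
      simp only [hedef]; ring
    rw [hvdef, h3]
    exact h2
  have hvc : Continuous v := continuous_iff_continuousAt.mpr fun t => (hv t).continuousAt
  have hvdiff : Differentiable ℝ v := fun t => (hv t).differentiableAt
  obtain ⟨t₁, ht₁0, ht₁T, ht₁ne⟩ : ∃ t₁ : ℝ, 0 < t₁ ∧ t₁ < T ∧ γ t₁ ≠ 0 := by
    have hτ : ∃ τ : ℝ, γ τ ≠ 0 := by
      by_contra hcon
      push_neg at hcon
      obtain ⟨ta, tb, hab⟩ := hnc
      exact hab ((hcon ta).trans (hcon tb).symm)
    obtain ⟨τ, hτ0⟩ := hτ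
    have hperiodic : Function.Periodic γ T := hper
    set x := τ - (⌊τ/T⌋ : ℤ) * T with hxdef
    have hγx : γ x = γ τ := hperiodic.sub_int_mul_eq ⌊τ/T⌋
    have hfl1 : ((⌊τ/T⌋ : ℤ) : ℝ) ≤ τ/T := Int.floor_le _
    have hfl2 : τ/T < ((⌊τ/T⌋ : ℤ) : ℝ) + 1 := Int.lt_floor_add_one _
    have hdiv : τ/T * T = τ := by field_simp
    have hx0 : 0 ≤ x := by
      rw [hxdef]
      nlinarith
    have hxT : x < T := by
      rw [hxdef]
      nlinarith
    rcases eq_or_lt_of_le hx0 with hxe | hxlt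
    · have hγ0 : γ 0 ≠ 0 := by rw [hxe, hγx]; exact hτ0
      have hopen : IsOpen {s : ℝ | γ s ≠ 0} := isOpen_compl_singleton.preimage hγc
      obtain ⟨δ, hδ0, hball⟩ := Metric.isOpen_iff.mp hopen 0 hγ0
      have h6 : (0:ℝ) < min (δ/2) (T/2) := lt_min (by positivity) (by positivity)
      refine ⟨min (δ/2) (T/2), h6, ?_, ?_⟩
      · have := min_le_right (δ/2) (T/2)
        linarith
      · apply hball
        rw [Metric.mem_ball, Real.dist_eq, sub_zero, abs_of_pos h6]
        have := min_le_left (δ/2) (T/2)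
        linarith
    · exact ⟨x, hxlt, hxT, by rw [hγx]; exact hτ0⟩
  have hγT : γ T = γ 0 := by simpa using hper 0
  have hD0 : DD 0 = 0 := by rw [hDdef]; exact intervalIntegral.integral_same
  have huT : u T = u 0 := by simp only [hudef, hγT]
  have hv0 : v 0 = ε * u 0 := by
    simp only [hvdef, hD0]
    simp
  have hvT : v T = ε * u 0 * Real.exp (-DD T) := by
    simp only [hvdef, huT]
  have hεu00 : 0 ≤ ε * u 0 := husign 0
  have hIgoal : (∫ t in (0:ℝ)..T,
      (deriv (fun u : ℝ => Pn u (γ t).2 + Pm u (γ t).2) (γ t).1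
        + deriv (fun v : ℝ => Qn (γ t).1 v + Qm (γ t).1 v) (γ t).2)) = DD T := by
    rw [hDdef]
    exact intervalIntegral.integral_congr fun t _ => hdeq t
  rw [hIgoal]
  constructor
  · intro hsgn
    have hkey : ∀ t : ℝ, 0 ≤ -(ε * e t) := by
      intro t
      by_cases h0 : γ t = 0
      · rw [he0 t h0]; simp
      · obtain ⟨θ0, R, hR, heq⟩ := hesign t h0
        rw [heq]
        have h3 := hsgn θ0
        have h4 := hbmε θ0
        nlinarith [mul_pos (mul_pos hR h4) h3]
    have hkeypos : ∀ t : ℝ, γ t ≠ 0 → 0 < -(ε * e t) := by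
      intro t h0
      obtain ⟨θ0, R, hR, heq⟩ := hesign t h0
      rw [heq]
      have h3 := hsgn θ0
      have h4 := hbmε θ0
      nlinarith [mul_pos (mul_pos hR h4) h3]
    have hmono : Monotone v := by
      apply monotone_of_deriv_nonneg hvdiff
      intro t
      rw [(hv t).deriv]
      exact mul_nonneg (hkey t) (Real.exp_nonneg _)
    have hopen2 : IsOpen {s : ℝ | 0 < -(ε * e s)} :=
      isOpen_lt continuous_const ((continuous_const.mul hec).neg)
    obtain ⟨δ, hδ0, hball⟩ := Metric.isOpen_iff.mp hopen2 t₁ (hkeypos t₁ ht₁ne)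
    set δ' : ℝ := min (δ/2) (min (t₁/2) ((T - t₁)/2)) with hδ'def
    have hδ'0 : 0 < δ' :=
      lt_min (by linarith) (lt_min (by linarith) (by linarith))
    have hδ'1 : δ' ≤ δ/2 := min_le_left _ _
    have hδ'2 : δ' ≤ t₁/2 := le_trans (min_le_right _ _) (min_le_left _ _)
    have hδ'3 : δ' ≤ (T - t₁)/2 := le_trans (min_le_right _ _) (min_le_right _ _)
    have hsub : Set.Icc (t₁ - δ') (t₁ + δ') ⊆ {s : ℝ | 0 < -(ε * e s)} := by
      intro s hs
      apply hball
      rw [Metric.mem_ball, Real.dist_eq, abs_sub_lt_iff]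
      obtain ⟨hs1, hs2⟩ := hs
      constructor <;> linarith
    have hstrict : StrictMonoOn v (Set.Icc (t₁ - δ') (t₁ + δ')) := by
      apply strictMonoOn_of_deriv_pos (convex_Icc _ _) hvc.continuousOn
      intro s hs
      rw [interior_Icc] at hs
      rw [(hv s).deriv]
      exact mul_pos (hsub ⟨hs.1.le, hs.2.le⟩) (Real.exp_pos _)
    have c1 : v 0 ≤ v (t₁ - δ') := hmono (by linarith)
    have c2 : v (t₁ - δ') < v (t₁ + δ') :=
      hstrict ⟨le_refl _, by linarith⟩ ⟨by linarith, le_refl _⟩ (by linarith)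
    have c3 : v (t₁ + δ') ≤ v T := hmono (by linarith)
    have hvv : v 0 < v T := by linarith
    rw [hv0, hvT] at hvv
    have hεu0pos : 0 < ε * u 0 := by
      rcases eq_or_lt_of_le hεu00 with hz | hz
      · exfalso; rw [← hz] at hvv; simp at hvv
      · exact hz
    have hexp1 : 1 < Real.exp (-DD T) := by
      by_contra hcon
      push_neg at hcon
      nlinarith
    have h9 : 0 < -DD T := Real.one_lt_exp_iff.mp hexp1
    linarith
  · intro hsgn
    have hkey : ∀ t : ℝ, 0 ≤ ε * e t := by
      intro t
      by_cases h0 : γ t = 0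
      · rw [he0 t h0]; simp
      · obtain ⟨θ0, R, hR, heq⟩ := hesign t h0
        rw [heq]
        have h3 := hsgn θ0
        have h4 := hbmε θ0
        nlinarith [mul_pos hR h4]
    have hkeypos : ∀ t : ℝ, γ t ≠ 0 → 0 < ε * e t := by
      intro t h0
      obtain ⟨θ0, R, hR, heq⟩ := hesign t h0
      rw [heq]
      have h3 := hsgn θ0
      have h4 := hbmε θ0
      nlinarith [mul_pos hR h4]
    have hmono : Antitone v := by
      apply antitone_of_deriv_nonpos hvdiff
      intro t
      rw [(hv t).deriv]
      have := hkey t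
      have := Real.exp_nonneg (-DD t)
      nlinarith
    have hopen2 : IsOpen {s : ℝ | 0 < ε * e s} :=
      isOpen_lt continuous_const (continuous_const.mul hec)
    obtain ⟨δ, hδ0, hball⟩ := Metric.isOpen_iff.mp hopen2 t₁ (hkeypos t₁ ht₁ne)
    set δ' : ℝ := min (δ/2) (min (t₁/2) ((T - t₁)/2)) with hδ'def
    have hδ'0 : 0 < δ' :=
      lt_min (by linarith) (lt_min (by linarith) (by linarith))
    have hδ'1 : δ' ≤ δ/2 := min_le_left _ _
    have hδ'2 : δ' ≤ t₁/2 := le_trans (min_le_right _ _) (min_le_left _ _)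
    have hδ'3 : δ' ≤ (T - t₁)/2 := le_trans (min_le_right _ _) (min_le_right _ _)
    have hsub : Set.Icc (t₁ - δ') (t₁ + δ') ⊆ {s : ℝ | 0 < ε * e s} := by
      intro s hs
      apply hball
      rw [Metric.mem_ball, Real.dist_eq, abs_sub_lt_iff]
      obtain ⟨hs1, hs2⟩ := hs
      constructor <;> linarith
    have hstrict : StrictAntiOn v (Set.Icc (t₁ - δ') (t₁ + δ')) := by
      apply strictAntiOn_of_deriv_neg (convex_Icc _ _) hvc.continuousOn
      intro s hs
      rw [interior_Icc] at hs
      rw [(hv s).deriv]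
      have h7 := hsub (⟨hs.1.le, hs.2.le⟩ : s ∈ Set.Icc (t₁ - δ') (t₁ + δ'))
      have h8 := Real.exp_pos (-DD s)
      simp only [Set.mem_setOf_eq] at h7
      nlinarith
    have c1 : v (t₁ - δ') ≤ v 0 := hmono (by linarith)
    have c2 : v (t₁ + δ') < v (t₁ - δ') :=
      hstrict ⟨le_refl _, by linarith⟩ ⟨by linarith, le_refl _⟩ (by linarith)
    have c3 : v T ≤ v (t₁ + δ') := hmono (by linarith)
    have hvv : v T < v 0 := by linarith
    rw [hv0, hvT] at hvv
    have hεu0pos : 0 < ε * u 0 := by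
      rcases eq_or_lt_of_le hεu00 with hz | hz
      · exfalso; rw [← hz] at hvv; simp at hvv
      · exact hz
    have hexp1 : Real.exp (-DD T) < 1 := by
      by_contra hcon
      push_neg at hcon
      nlinarith
    have h9 : -DD T < 0 := Real.exp_lt_one_iff.mp hexp1
    linarith
end

section
/- Let κ > 0 and let L : ℝ × ℝ → ℝ be C^∞. Let c₁, c₂ : [0,κ] → ℝ be continuous with c₁(t) < c₂(t) for all t and c_i(0) = c_i(κ) for i = 1, 2, and let U = {(t,x) : t ∈ [0,κ], c₁(t) < x < c₂(t)}. Let F be C¹ on U with F(κ, x) = F(0, x) for every x with both (0,x) ∈ U and (κ,x) ∈ U, and define G(t,x) = ∂L/∂x(t,x) + ∂F/∂t(t,x) + ∂F/∂x(t,x)·L(t,x). Assume G(t,x) ≥ 0 for all (t,x) ∈ U and that there is a nonempty open set E ⊆ (0,κ) such that G(t,x) ≠ 0 whenever (t,x) ∈ U and t ∈ E. Then: (a) if x₁, x₂ : [0,κ] → ℝ both solve x' = L(t,x) with graphs contained in U and x_i(κ) = x_i(0), then x₁ = x₂; and (b) any such periodic solution x satisfies ∫₀^κ ∂L/∂x(t,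 x(t)) dt > 0, i.e., it is a hyperbolic unstable limit cycle. -/
open Set MeasureTheory Metric

/-- Lemma on uniqueness and hyperbolicity of the periodic orbit.
With `U = {(t,x) : t ∈ [0,κ], c₁(t) < x < c₂(t)}`, `F` C¹ on `U` with `F(κ,·) = F(0,·)`,
`G = ∂L/∂x + ∂F/∂t + ∂F/∂x·L ≥ 0` on `U` and `G ≠ 0` on `U ∩ (E × ℝ)` for some nonempty
open `E ⊆ (0,κ)`:
(a) any two periodic solutions of `x' = L(t,x)` with graphs in `U` coincide on `[0,κ]`;
(b) any such periodic solution satisfies `∫₀^κ ∂L/∂x(t,x(t)) dt > 0`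
(a hyperbolic unstable limit cycle). -/
theorem stmt_5 (κ : ℝ) (hκ : 0 < κ)
    (L : ℝ → ℝ → ℝ) (hL : ContDiff ℝ (⊤ : ℕ∞) (fun z : ℝ × ℝ => L z.1 z.2))
    (c₁ c₂ : ℝ → ℝ)
    (hc₁ : ContinuousOn c₁ (Set.Icc 0 κ)) (hc₂ : ContinuousOn c₂ (Set.Icc 0 κ))
    (hc : ∀ t ∈ Set.Icc (0:ℝ) κ, c₁ t < c₂ t)
    (hc₁per : c₁ 0 = c₁ κ) (hc₂per : c₂ 0 = c₂ κ)
    (U : Set (ℝ × ℝ))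
    (hU : U = {z : ℝ × ℝ | z.1 ∈ Set.Icc (0:ℝ) κ ∧ c₁ z.1 < z.2 ∧ z.2 < c₂ z.1})
    (F : ℝ → ℝ → ℝ) (hF : ContDiffOn ℝ 1 (fun z : ℝ × ℝ => F z.1 z.2) U)
    (hFper : ∀ x : ℝ, ((0:ℝ), x) ∈ U → (κ, x) ∈ U → F κ x = F 0 x)
    (G : ℝ → ℝ → ℝ)
    (hG : ∀ t x : ℝ, G t x
      = deriv (fun y : ℝ => L t y) x + deriv (fun s : ℝ => F s x) t
        + deriv (fun y : ℝ => F t y) x * L t x)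
    (hGpos : ∀ z ∈ U, 0 ≤ G z.1 z.2)
    (E : Set ℝ) (hEopen : IsOpen E) (hEne : E.Nonempty) (hEsub : E ⊆ Set.Ioo 0 κ)
    (hGne : ∀ z ∈ U, z.1 ∈ E → G z.1 z.2 ≠ 0) :
    (∀ x₁ x₂ : ℝ → ℝ,
        (∀ t ∈ Set.Icc (0:ℝ) κ, HasDerivAt x₁ (L t (x₁ t)) t) →
        (∀ t ∈ Set.Icc (0:ℝ) κ, (t, x₁ t) ∈ U) → x₁ κ = x₁ 0 →
        (∀ t ∈ Set.Icc (0:ℝ) κ, HasDerivAt x₂ (L t (x₂ t)) t) →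
        (∀ t ∈ Set.Icc (0:ℝ) κ, (t, x₂ t) ∈ U) → x₂ κ = x₂ 0 →
        ∀ t ∈ Set.Icc (0:ℝ) κ, x₁ t = x₂ t) ∧
    (∀ x : ℝ → ℝ,
        (∀ t ∈ Set.Icc (0:ℝ) κ, HasDerivAt x (L t (x t)) t) →
        (∀ t ∈ Set.Icc (0:ℝ) κ, (t, x t) ∈ U) → x κ = x 0 →
        0 < ∫ t in (0:ℝ)..κ, deriv (fun y : ℝ => L t y) (x t)) := by
  set fL : ℝ × ℝ → ℝ := fun z => L z.1 z.2 with hfL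
  set fF : ℝ × ℝ → ℝ := fun z => F z.1 z.2 with hfF
  set V : Set (ℝ × ℝ) := {z : ℝ × ℝ | z.1 ∈ Set.Ioo 0 κ ∧ c₁ z.1 < z.2 ∧ z.2 < c₂ z.1} with hV
  have hVU : V ⊆ U := by
    rw [hU]; exact fun z hz => ⟨Set.Ioo_subset_Icc_self hz.1, hz.2⟩
  have memV : ∀ z : ℝ × ℝ, z ∈ U → z.1 ∈ Set.Ioo 0 κ → z ∈ V := by
    rw [hU]; exact fun z hz h1 => ⟨h1, hz.2⟩
  have hW : IsOpen ((Set.Ioo (0:ℝ) κ) ×ˢ (Set.univ : Set ℝ)) := isOpen_Ioo.prod isOpen_univ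
  have hcont1 : ContinuousOn (fun z : ℝ × ℝ => z.2 - c₁ z.1)
      ((Set.Ioo (0:ℝ) κ) ×ˢ (Set.univ : Set ℝ)) := by
    apply continuous_snd.continuousOn.sub
    intro z hz
    have h1 : ContinuousAt c₁ z.1 := hc₁.continuousAt (Icc_mem_nhds hz.1.1 hz.1.2)
    exact (h1.comp continuousAt_fst).continuousWithinAt
  have hcont2 : ContinuousOn (fun z : ℝ × ℝ => c₂ z.1 - z.2)
      ((Set.Ioo (0:ℝ) κ) ×ˢ (Set.univ : Set ℝ)) := by
    apply ContinuousOn.sub _ continuous_snd.continuousOn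
    intro z hz
    have h1 : ContinuousAt c₂ z.1 := hc₂.continuousAt (Icc_mem_nhds hz.1.1 hz.1.2)
    exact (h1.comp continuousAt_fst).continuousWithinAt
  have hVopen : IsOpen V := by
    have h1 := (hcont1.isOpen_inter_preimage hW (isOpen_Ioi : IsOpen (Set.Ioi (0:ℝ)))).inter
      (hcont2.isOpen_inter_preimage hW (isOpen_Ioi : IsOpen (Set.Ioi (0:ℝ))))
    convert h1 using 1
    ext z
    simp only [hV, Set.mem_setOf_eq, Set.mem_inter_iff, Set.mem_prod, Set.mem_preimage,
      Set.mem_Ioi, Set.mem_univ, and_true, sub_pos]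
    tauto
  -- differentiability facts for F
  have hFV : ContDiffOn ℝ 1 fF V := hF.mono hVU
  have hFd : ∀ z ∈ V, HasFDerivAt fF (fderiv ℝ fF z) z := by
    intro z hz
    exact ((hFV.contDiffAt (hVopen.mem_nhds hz)).differentiableAt one_ne_zero).hasFDerivAt
  have hFderivCont : ContinuousOn (fderiv ℝ fF) V :=
    hFV.continuousOn_fderiv_of_isOpen hVopen le_rfl
  -- differentiability facts for L
  have hLd : ∀ z : ℝ × ℝ, HasFDerivAt fL (fderiv ℝ fL z) z :=
    fun z => ((hL.differentiable (by simp)) z).hasFDerivAt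
  have hLderivCont : Continuous (fderiv ℝ fL) := hL.continuous_fderiv (by simp)
  set Lx : ℝ → ℝ → ℝ := fun t x => fderiv ℝ fL (t, x) (0, 1) with hLx
  set Ft : ℝ → ℝ → ℝ := fun t x => fderiv ℝ fF (t, x) (1, 0) with hFt
  set Fx : ℝ → ℝ → ℝ := fun t x => fderiv ℝ fF (t, x) (0, 1) with hFx
  have hLsect : ∀ t x : ℝ, HasDerivAt (fun y => L t y) (Lx t x) x := by
    intro t x
    have h1 : HasDerivAt (fun y : ℝ => ((t, y) : ℝ × ℝ)) ((0:ℝ), (1:ℝ)) x :=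
      (hasDerivAt_const x t).prodMk (hasDerivAt_id x)
    exact (hLd (t, x)).comp_hasDerivAt x h1
  have hLxEq : ∀ t x : ℝ, deriv (fun y => L t y) x = Lx t x := fun t x => (hLsect t x).deriv
  have hLxCont : Continuous (fun z : ℝ × ℝ => Lx z.1 z.2) := by
    have : Continuous (fun z : ℝ × ℝ => fderiv ℝ fL z ((0:ℝ), (1:ℝ))) :=
      hLderivCont.clm_apply continuous_const
    exact this
  have hFsectx : ∀ t x : ℝ, (t, x) ∈ V → HasDerivAt (fun y => F t y) (Fx t x) x := by
    intro t x hz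
    exact (hFd _ hz).comp_hasDerivAt x ((hasDerivAt_const x t).prodMk (hasDerivAt_id x))
  have hFsectt : ∀ t x : ℝ, (t, x) ∈ V → HasDerivAt (fun s => F s x) (Ft t x) t := by
    intro t x hz
    exact (hFd _ hz).comp_hasDerivAt t ((hasDerivAt_id t).prodMk (hasDerivAt_const t x))
  have hGV : ∀ t x : ℝ, (t, x) ∈ V → G t x = Lx t x + Ft t x + Fx t x * L t x := by
    intro t x hz
    rw [hG, hLxEq, (hFsectt t x hz).deriv, (hFsectx t x hz).deriv]
  have hchain : ∀ (γ : ℝ → ℝ) (d t : ℝ), HasDerivAt γ d t → (t, γ t) ∈ V →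
      HasDerivAt (fun u => F u (γ u)) (Ft t (γ t) + Fx t (γ t) * d) t := by
    intro γ d t hγ hz
    have h1 : HasDerivAt (fun u : ℝ => ((u, γ u) : ℝ × ℝ)) ((1:ℝ), d) t :=
      (hasDerivAt_id t).prodMk hγ
    have h2 := (hFd _ hz).comp_hasDerivAt t h1
    refine h2.congr_deriv (Eq.symm ?_)
    have h3 : ((1:ℝ), d) = ((1:ℝ), (0:ℝ)) + d • ((0:ℝ), (1:ℝ)) := by
      simp [Prod.ext_iff]
    rw [h3, map_add, ContinuousLinearMap.map_smul, hFt, hFx, smul_eq_mul]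
    ring
  have hFtCont : ContinuousOn (fun z : ℝ × ℝ => Ft z.1 z.2) V :=
    hFderivCont.clm_apply continuousOn_const
  have hFxCont : ContinuousOn (fun z : ℝ × ℝ => Fx z.1 z.2) V :=
    hFderivCont.clm_apply continuousOn_const
  -- a subinterval [a,b] of E
  obtain ⟨t₀E, ht₀E⟩ := hEne
  obtain ⟨εE, hεE, hballE⟩ := Metric.isOpen_iff.mp hEopen t₀E ht₀E
  set a : ℝ := t₀E - εE/2 with ha
  set b : ℝ := t₀E + εE/2 with hb
  have hab : a < b := by rw [ha, hb]; linarith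
  have habE : Set.Icc a b ⊆ E := by
    intro u hu
    apply hballE
    rw [Metric.mem_ball, Real.dist_eq, abs_lt]
    have h1 := hu.1; have h2 := hu.2
    rw [ha] at h1; rw [hb] at h2
    constructor <;> linarith
  have habIoo : Set.Icc a b ⊆ Set.Ioo 0 κ := fun u hu => hEsub (habE hu)
  have haI : a ∈ Set.Icc (0:ℝ) κ := Set.Ioo_subset_Icc_self (habIoo ⟨le_rfl, hab.le⟩)
  have hbI : b ∈ Set.Icc (0:ℝ) κ := Set.Ioo_subset_Icc_self (habIoo ⟨hab.le, le_rfl⟩)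
  -- PART B
  have partB : ∀ x : ℝ → ℝ,
      (∀ t ∈ Set.Icc (0:ℝ) κ, HasDerivAt x (L t (x t)) t) →
      (∀ t ∈ Set.Icc (0:ℝ) κ, (t, x t) ∈ U) → x κ = x 0 →
      0 < ∫ t in (0:ℝ)..κ, deriv (fun y : ℝ => L t y) (x t) := by
    intro x hx' hxU hxper
    have hxc : ∀ t ∈ Set.Icc (0:ℝ) κ, ContinuousAt x t := fun t ht => (hx' t ht).continuousAt
    have hφc : ContinuousOn (fun s => Lx s (x s)) (Set.Icc 0 κ) := by
      intro t ht
      exact ((hLxCont.continuousAt).comp ((continuousAt_id).prodMk (hxc t ht))).continuousWithinAt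
    have hφint : ∀ t ∈ Set.Icc (0:ℝ) κ, IntervalIntegrable (fun s => Lx s (x s)) volume 0 t := by
      intro t ht
      apply (hφc.mono ?_).intervalIntegrable
      rw [Set.uIcc_of_le ht.1]
      exact Set.Icc_subset_Icc_right ht.2
    set m : ℝ → ℝ := fun t => ∫ s in (0:ℝ)..t, Lx s (x s) with hm
    have hmd : ∀ t ∈ Set.Ioo (0:ℝ) κ, HasDerivAt m (Lx t (x t)) t := by
      intro t ht
      apply intervalIntegral.integral_hasDerivAt_right
        (hφint t (Set.mem_Icc_of_Ioo ht))
        ((hφc.mono Set.Ioo_subset_Icc_self).stronglyMeasurableAtFilter isOpen_Ioo t ht)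
      exact (hLxCont.continuousAt).comp ((continuousAt_id).prodMk (hxc t (Set.mem_Icc_of_Ioo ht)))
    have hmc : ContinuousOn m (Set.Icc 0 κ) := by
      have h1 : IntegrableOn (fun s => Lx s (x s)) (Set.uIcc 0 κ) volume := by
        rw [Set.uIcc_of_le hκ.le]
        exact hφc.integrableOn_compact isCompact_Icc
      have := intervalIntegral.continuousOn_primitive_interval h1
      rwa [Set.uIcc_of_le hκ.le] at this
    set g : ℝ → ℝ := fun t => F t (x t) with hg
    have hgc : ContinuousOn g (Set.Icc 0 κ) := by
      intro t ht
      have hc1 : ContinuousWithinAt (fun u => ((u, x u) : ℝ × ℝ)) (Set.Icc 0 κ) t :=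
        ((continuousAt_id).prodMk (hxc t ht)).continuousWithinAt
      have hc2 : ContinuousWithinAt fF U (t, x t) := hF.continuousOn.continuousWithinAt (hxU t ht)
      exact ContinuousWithinAt.comp (g := fF) (f := fun u => ((u, x u) : ℝ × ℝ)) hc2 hc1
        (fun u hu => hxU u hu)
    set h : ℝ → ℝ := fun t => g t + m t with hh
    have hhd : ∀ t ∈ Set.Ioo (0:ℝ) κ, HasDerivAt h (G t (x t)) t := by
      intro t ht
      have hmemV : (t, x t) ∈ V := memV _ (hxU t (Set.mem_Icc_of_Ioo ht)) ht
      have h1 := hchain x (L t (x t)) t (hx' t (Set.mem_Icc_of_Ioo ht)) hmemV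
      have h2 := h1.add (hmd t ht)
      rw [hGV t (x t) hmemV]
      refine h2.congr_deriv (Eq.symm ?_)
      ring
    have hhc : ContinuousOn h (Set.Icc 0 κ) := hgc.add hmc
    have hmono : MonotoneOn h (Set.Icc 0 κ) := by
      apply monotoneOn_of_deriv_nonneg (convex_Icc 0 κ) hhc
      · intro t ht
        rw [interior_Icc] at ht
        exact ((hhd t ht).differentiableAt).differentiableWithinAt
      · intro t ht
        rw [interior_Icc] at ht
        rw [(hhd t ht).deriv]
        exact hGpos (t, x t) (hxU t (Set.mem_Icc_of_Ioo ht))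
    have hstrict : StrictMonoOn h (Set.Icc a b) := by
      apply strictMonoOn_of_deriv_pos (convex_Icc a b)
        (hhc.mono ((Set.Icc_subset_Icc haI.1 hbI.2)))
      intro u hu
      rw [interior_Icc] at hu
      have hu' : u ∈ Set.Ioo 0 κ := habIoo (Set.Ioo_subset_Icc_self hu)
      rw [(hhd u hu').deriv]
      have hUu := hxU u (Set.mem_Icc_of_Ioo hu')
      exact lt_of_le_of_ne (hGpos _ hUu)
        (Ne.symm (hGne (u, x u) hUu (habE (Set.Ioo_subset_Icc_self hu))))
    have h0κ : h 0 < h κ := by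
      calc h 0 ≤ h a := hmono (Set.left_mem_Icc.mpr hκ.le) haI haI.1
        _ < h b := hstrict (Set.left_mem_Icc.mpr hab.le) (Set.right_mem_Icc.mpr hab.le) hab
        _ ≤ h κ := hmono hbI (Set.right_mem_Icc.mpr hκ.le) hbI.2
    have hgper : g κ = g 0 := by
      have h0U : ((0:ℝ), x 0) ∈ U := hxU 0 (Set.left_mem_Icc.mpr hκ.le)
      have hκU : (κ, x 0) ∈ U := by
        have := hxU κ (Set.right_mem_Icc.mpr hκ.le)
        rwa [hxper] at this
      rw [hg]
      simp only
      rw [hxper]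
      exact hFper (x 0) h0U hκU
    have hm0 : m 0 = 0 := intervalIntegral.integral_same
    have hfin : 0 < m κ := by
      have : h κ = g κ + m κ := rfl
      have h2 : h 0 = g 0 + m 0 := rfl
      rw [this, h2, hgper, hm0] at h0κ
      linarith
    have hre : (∫ t in (0:ℝ)..κ, deriv (fun y : ℝ => L t y) (x t)) = m κ := by
      rw [hm]
      apply intervalIntegral.integral_congr
      intro u _
      exact hLxEq u (x u)
    rw [hre]
    exact hfin
  -- UNIQUENESS via Gronwall
  have huniq : ∀ x₁ x₂ : ℝ → ℝ,
      (∀ t ∈ Set.Icc (0:ℝ) κ, HasDerivAt x₁ (L t (x₁ t)) t) →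
      (∀ t ∈ Set.Icc (0:ℝ) κ, HasDerivAt x₂ (L t (x₂ t)) t) →
      (∃ t₀ ∈ Set.Icc (0:ℝ) κ, x₁ t₀ = x₂ t₀) →
      ∀ t ∈ Set.Icc (0:ℝ) κ, x₁ t = x₂ t := by
    intro x₁ x₂ hx₁' hx₂' ⟨t₀, ht₀, heq⟩
    have hx₁c : ContinuousOn x₁ (Set.Icc 0 κ) :=
      fun u hu => ((hx₁' u hu).continuousAt).continuousWithinAt
    have hx₂c : ContinuousOn x₂ (Set.Icc 0 κ) :=
      fun u hu => ((hx₂' u hu).continuousAt).continuousWithinAt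
    obtain ⟨C1, hC1⟩ := isCompact_Icc.exists_bound_of_continuousOn hx₁c
    obtain ⟨C2, hC2⟩ := isCompact_Icc.exists_bound_of_continuousOn hx₂c
    set C : ℝ := max C1 C2 with hC
    have hx₁m : ∀ u ∈ Set.Icc (0:ℝ) κ, x₁ u ∈ Set.Icc (-C) C := by
      intro u hu
      have := hC1 u hu
      rw [Real.norm_eq_abs, abs_le] at this
      constructor
      · have : -C1 ≤ x₁ u := this.1
        have h2 : -C ≤ -C1 := neg_le_neg (le_max_left _ _)
        linarith
      · exact le_trans this.2 (le_max_left _ _)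
    have hx₂m : ∀ u ∈ Set.Icc (0:ℝ) κ, x₂ u ∈ Set.Icc (-C) C := by
      intro u hu
      have := hC2 u hu
      rw [Real.norm_eq_abs, abs_le] at this
      constructor
      · have h2 : -C ≤ -C2 := neg_le_neg (le_max_right _ _)
        linarith [this.1]
      · exact le_trans this.2 (le_max_right _ _)
    set proj : ℝ → ℝ := fun u => max 0 (min u κ) with hproj
    have hprojm : ∀ u : ℝ, proj u ∈ Set.Icc (0:ℝ) κ := by
      intro u
      exact ⟨le_max_left _ _, max_le hκ.le (min_le_right _ _)⟩
    have hprojeq : ∀ u ∈ Set.Icc (0:ℝ) κ, proj u = u := by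
      intro u hu
      rw [hproj]
      simp only
      rw [min_eq_left hu.2, max_eq_right hu.1]
    obtain ⟨K0, hK0⟩ := (isCompact_Icc.prod (isCompact_Icc (a := -C) (b := C))).exists_bound_of_continuousOn
      (hLderivCont.continuousOn)
    set K : NNReal := ⟨max K0 0, le_max_right _ _⟩ with hK
    set v : ℝ → ℝ → ℝ := fun u y => L (proj u) y with hv
    have hlip : ∀ u : ℝ, LipschitzOnWith K (v u) (Set.Icc (-C) C) := by
      intro u
      apply Convex.lipschitzOnWith_of_nnnorm_hasDerivWithin_le (f' := fun y => Lx (proj u) y)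
        (convex_Icc _ _)
        (fun y _ => (hLsect (proj u) y).hasDerivWithinAt)
      intro y hy
      have hmem : ((proj u, y) : ℝ × ℝ) ∈ (Set.Icc (0:ℝ) κ) ×ˢ (Set.Icc (-C) C) :=
        ⟨hprojm u, hy⟩
      have h1 : ‖Lx (proj u) y‖ ≤ K0 := by
        have h2 : ‖fderiv ℝ fL (proj u, y) ((0:ℝ), (1:ℝ))‖ ≤ ‖fderiv ℝ fL (proj u, y)‖ * ‖(((0:ℝ), (1:ℝ)) : ℝ × ℝ)‖ :=
          ContinuousLinearMap.le_opNorm _ _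
        have h3 : ‖(((0:ℝ), (1:ℝ)) : ℝ × ℝ)‖ = 1 := by
          simp [Prod.norm_def]
        rw [h3, mul_one] at h2
        exact h2.trans (hK0 _ hmem)
      rw [← NNReal.coe_le_coe, coe_nnnorm, hK]
      exact h1.trans (le_max_left _ _)
    have hveq : ∀ u ∈ Set.Icc (0:ℝ) κ, ∀ y : ℝ, v u y = L u y := by
      intro u hu y
      rw [hv]
      simp only
      rw [hprojeq u hu]
    intro t ht
    rcases le_total t t₀ with hle | hle
    ·
      have hsub : Set.Icc (0:ℝ) t₀ ⊆ Set.Icc (0:ℝ) κ := Set.Icc_subset_Icc_right ht₀.2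
      have := ODE_solution_unique_of_mem_Icc_left (v := v) (s := fun _ => Set.Icc (-C) C)
        (fun u _ => hlip u) (hx₁c.mono hsub)
        (fun u hu => by
          rw [hveq u (hsub (Set.Ioc_subset_Icc_self hu))]
          exact (hx₁' u (hsub (Set.Ioc_subset_Icc_self hu))).hasDerivWithinAt)
        (fun u hu => hx₁m u (hsub (Set.Ioc_subset_Icc_self hu)))
        (hx₂c.mono hsub)
        (fun u hu => by
          rw [hveq u (hsub (Set.Ioc_subset_Icc_self hu))]
          exact (hx₂' u (hsub (Set.Ioc_subset_Icc_self hu))).hasDerivWithinAt)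
        (fun u hu => hx₂m u (hsub (Set.Ioc_subset_Icc_self hu)))
        heq
      exact this ⟨ht.1, hle⟩
    · have hsub : Set.Icc t₀ κ ⊆ Set.Icc (0:ℝ) κ := Set.Icc_subset_Icc_left ht₀.1
      have := ODE_solution_unique_of_mem_Icc_right (v := v) (s := fun _ => Set.Icc (-C) C)
        (fun u _ => hlip u) (hx₁c.mono hsub)
        (fun u hu => by
          rw [hveq u (hsub (Set.Ico_subset_Icc_self hu))]
          exact (hx₁' u (hsub (Set.Ico_subset_Icc_self hu))).hasDerivWithinAt)
        (fun u hu => hx₁m u (hsub (Set.Ico_subset_Icc_self hu)))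
        (hx₂c.mono hsub)
        (fun u hu => by
          rw [hveq u (hsub (Set.Ico_subset_Icc_self hu))]
          exact (hx₂' u (hsub (Set.Ico_subset_Icc_self hu))).hasDerivWithinAt)
        (fun u hu => hx₂m u (hsub (Set.Ico_subset_Icc_self hu)))
        heq
      exact this ⟨hle, ht.2⟩
  -- KEY contradiction for strictly ordered periodic solutions
  have hkey : ∀ x₁ x₂ : ℝ → ℝ,
      (∀ t ∈ Set.Icc (0:ℝ) κ, HasDerivAt x₁ (L t (x₁ t)) t) →
      (∀ t ∈ Set.Icc (0:ℝ) κ, (t, x₁ t) ∈ U) → x₁ κ = x₁ 0 →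
      (∀ t ∈ Set.Icc (0:ℝ) κ, HasDerivAt x₂ (L t (x₂ t)) t) →
      (∀ t ∈ Set.Icc (0:ℝ) κ, (t, x₂ t) ∈ U) → x₂ κ = x₂ 0 →
      (∀ t ∈ Set.Icc (0:ℝ) κ, x₁ t < x₂ t) → False := by
    intro x₁ x₂ hx₁' hx₁U hx₁per hx₂' hx₂U hx₂per hlt
    have hx₁c : ∀ t ∈ Set.Icc (0:ℝ) κ, ContinuousAt x₁ t := fun u hu => (hx₁' u hu).continuousAt
    have hx₂c : ∀ t ∈ Set.Icc (0:ℝ) κ, ContinuousAt x₂ t := fun u hu => (hx₂' u hu).continuousAt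
    set ψ : ℝ → ℝ := fun t => x₂ t - x₁ t with hψ
    set dψ : ℝ → ℝ := fun t => L t (x₂ t) - L t (x₁ t) with hdψ
    set y : ℝ → ℝ → ℝ := fun t s => x₁ t + s * ψ t with hy
    set H : ℝ → ℝ → ℝ := fun t s => ψ t * Real.exp (F t (y t s)) with hH
    set H' : ℝ → ℝ → ℝ := fun t s =>
      dψ t * Real.exp (F t (y t s)) +
        ψ t * (Real.exp (F t (y t s)) * (Ft t (y t s) + Fx t (y t s) * (L t (x₁ t) + s * dψ t)))
      with hH'
    set P : ℝ → ℝ → ℝ := fun t s => ψ t * (Real.exp (F t (y t s)) * G t (y t s)) with hP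
    set Φ : ℝ → ℝ := fun t => ∫ s in (0:ℝ)..1, H t s with hΦ
    have hψpos : ∀ t ∈ Set.Icc (0:ℝ) κ, 0 < ψ t := fun t ht => sub_pos.mpr (hlt t ht)
    have hyU : ∀ t ∈ Set.Icc (0:ℝ) κ, ∀ s ∈ Set.Icc (0:ℝ) 1, ((t, y t s) : ℝ × ℝ) ∈ U := by
      intro t ht s hs
      have h1 := hx₁U t ht
      have h2 := hx₂U t ht
      rw [hU] at h1 h2 ⊢
      refine ⟨ht, ?_, ?_⟩
      · have h3 : x₁ t ≤ y t s := by
          have h4 := mul_nonneg hs.1 (hψpos t ht).le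
          show x₁ t ≤ x₁ t + s * ψ t
          linarith
        exact lt_of_lt_of_le h1.2.1 h3
      · have h3 : y t s ≤ x₂ t := by
          have h4 : s * ψ t ≤ 1 * ψ t := mul_le_mul_of_nonneg_right hs.2 (hψpos t ht).le
          show x₁ t + s * ψ t ≤ x₂ t
          have h5 : ψ t = x₂ t - x₁ t := rfl
          linarith
        exact lt_of_le_of_lt h3 h2.2.2
    -- joint continuity on [0,κ]×[0,1]
    have hx1J : ContinuousOn (fun p : ℝ × ℝ => x₁ p.1)
        ((Set.Icc (0:ℝ) κ) ×ˢ (Set.Icc (0:ℝ) 1)) :=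
      fun p hp => ((hx₁c p.1 hp.1).comp continuousAt_fst).continuousWithinAt
    have hx2J : ContinuousOn (fun p : ℝ × ℝ => x₂ p.1)
        ((Set.Icc (0:ℝ) κ) ×ˢ (Set.Icc (0:ℝ) 1)) :=
      fun p hp => ((hx₂c p.1 hp.1).comp continuousAt_fst).continuousWithinAt
    have hψJ : ContinuousOn (fun p : ℝ × ℝ => ψ p.1)
        ((Set.Icc (0:ℝ) κ) ×ˢ (Set.Icc (0:ℝ) 1)) := hx2J.sub hx1J
    have hYcont : ContinuousOn (fun p : ℝ × ℝ => ((p.1, y p.1 p.2) : ℝ × ℝ))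
        ((Set.Icc (0:ℝ) κ) ×ˢ (Set.Icc (0:ℝ) 1)) := by
      apply ContinuousOn.prodMk (continuous_fst.continuousOn)
      exact hx1J.add (continuous_snd.continuousOn.mul hψJ)
    have hFYcont : ContinuousOn (fun p : ℝ × ℝ => F p.1 (y p.1 p.2))
        ((Set.Icc (0:ℝ) κ) ×ˢ (Set.Icc (0:ℝ) 1)) :=
      ContinuousOn.comp (g := fF) hF.continuousOn hYcont
        (fun p hp => hyU p.1 hp.1 p.2 hp.2)
    have hHcontJ : ContinuousOn (fun p : ℝ × ℝ => H p.1 p.2)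
        ((Set.Icc (0:ℝ) κ) ×ˢ (Set.Icc (0:ℝ) 1)) :=
      hψJ.mul (Real.continuous_exp.comp_continuousOn hFYcont)
    -- joint continuity on Ω = (0,κ)×[0,1]
    set Ω : Set (ℝ × ℝ) := (Set.Ioo (0:ℝ) κ) ×ˢ (Set.Icc (0:ℝ) 1) with hΩ
    have hΩsub : Ω ⊆ (Set.Icc (0:ℝ) κ) ×ˢ (Set.Icc (0:ℝ) 1) :=
      Set.prod_mono Set.Ioo_subset_Icc_self (le_refl _)
    have hYmapsV : Set.MapsTo (fun p : ℝ × ℝ => ((p.1, y p.1 p.2) : ℝ × ℝ)) Ω V :=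
      fun p hp => memV _ (hyU p.1 (Set.Ioo_subset_Icc_self hp.1) p.2 hp.2) hp.1
    have heY : ContinuousOn (fun p : ℝ × ℝ => Real.exp (F p.1 (y p.1 p.2))) Ω :=
      Real.continuous_exp.comp_continuousOn (hFYcont.mono hΩsub)
    have hFtY : ContinuousOn (fun p : ℝ × ℝ => Ft p.1 (y p.1 p.2)) Ω :=
      ContinuousOn.comp (g := fun z : ℝ × ℝ => Ft z.1 z.2) hFtCont (hYcont.mono hΩsub) hYmapsV
    have hFxY : ContinuousOn (fun p : ℝ × ℝ => Fx p.1 (y p.1 p.2)) Ω :=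
      ContinuousOn.comp (g := fun z : ℝ × ℝ => Fx z.1 z.2) hFxCont (hYcont.mono hΩsub) hYmapsV
    have hLxY : ContinuousOn (fun p : ℝ × ℝ => Lx p.1 (y p.1 p.2)) Ω :=
      hLxCont.comp_continuousOn (hYcont.mono hΩsub)
    have hLY : ContinuousOn (fun p : ℝ × ℝ => L p.1 (y p.1 p.2)) Ω :=
      hL.continuous.comp_continuousOn (hYcont.mono hΩsub)
    have hL1 : ContinuousOn (fun p : ℝ × ℝ => L p.1 (x₁ p.1)) Ω :=
      hL.continuous.comp_continuousOn
        ((continuous_fst.continuousOn).prodMk (hx1J.mono hΩsub))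
    have hL2 : ContinuousOn (fun p : ℝ × ℝ => L p.1 (x₂ p.1)) Ω :=
      hL.continuous.comp_continuousOn
        ((continuous_fst.continuousOn).prodMk (hx2J.mono hΩsub))
    have hdψJ : ContinuousOn (fun p : ℝ × ℝ => dψ p.1) Ω := hL2.sub hL1
    have hH'contJ : ContinuousOn (fun p : ℝ × ℝ => H' p.1 p.2) Ω :=
      (hdψJ.mul heY).add ((hψJ.mono hΩsub).mul (heY.mul (hFtY.add (hFxY.mul
        (hL1.add ((continuous_snd.continuousOn).mul hdψJ))))))
    have hPcontJ : ContinuousOn (fun p : ℝ × ℝ => P p.1 p.2) Ω := by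
      have hQ : ContinuousOn (fun p : ℝ × ℝ => ψ p.1 * (Real.exp (F p.1 (y p.1 p.2)) *
          (Lx p.1 (y p.1 p.2) + Ft p.1 (y p.1 p.2) + Fx p.1 (y p.1 p.2) * L p.1 (y p.1 p.2)))) Ω :=
        (hψJ.mono hΩsub).mul (heY.mul ((hLxY.add hFtY).add (hFxY.mul hLY)))
      apply hQ.congr
      intro p hp
      show ψ p.1 * (Real.exp (F p.1 (y p.1 p.2)) * G p.1 (y p.1 p.2)) = _
      rw [hGV p.1 (y p.1 p.2) (hYmapsV hp)]
    -- fixed-t continuity in s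
    have hHs : ∀ t ∈ Set.Icc (0:ℝ) κ, ContinuousOn (fun s => H t s) (Set.Icc (0:ℝ) 1) := by
      intro t ht
      have h2 : ContinuousOn (fun s : ℝ => ((t, s) : ℝ × ℝ)) (Set.Icc (0:ℝ) 1) :=
        (continuous_const.prodMk continuous_id).continuousOn
      exact ContinuousOn.comp (g := fun p : ℝ × ℝ => H p.1 p.2) hHcontJ h2
        (fun s hs => ⟨ht, hs⟩)
    have hH's : ∀ t ∈ Set.Ioo (0:ℝ) κ, ContinuousOn (fun s => H' t s) (Set.Icc (0:ℝ) 1) := by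
      intro t ht
      have h2 : ContinuousOn (fun s : ℝ => ((t, s) : ℝ × ℝ)) (Set.Icc (0:ℝ) 1) :=
        (continuous_const.prodMk continuous_id).continuousOn
      exact ContinuousOn.comp (g := fun p : ℝ × ℝ => H' p.1 p.2) hH'contJ h2
        (fun s hs => ⟨ht, hs⟩)
    have hPs : ∀ t ∈ Set.Ioo (0:ℝ) κ, ContinuousOn (fun s => P t s) (Set.Icc (0:ℝ) 1) := by
      intro t ht
      have h2 : ContinuousOn (fun s : ℝ => ((t, s) : ℝ × ℝ)) (Set.Icc (0:ℝ) 1) :=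
        (continuous_const.prodMk continuous_id).continuousOn
      exact ContinuousOn.comp (g := fun p : ℝ × ℝ => P p.1 p.2) hPcontJ h2
        (fun s hs => ⟨ht, hs⟩)
    -- periodicity of Φ
    have hΦper : Φ κ = Φ 0 := by
      rw [hΦ]
      apply intervalIntegral.integral_congr
      intro s hs
      rw [Set.uIcc_of_le zero_le_one] at hs
      have hψper : ψ κ = ψ 0 := by rw [hψ]; show x₂ κ - x₁ κ = x₂ 0 - x₁ 0; rw [hx₁per, hx₂per]
      have hyeq : y κ s = y 0 s := by
        show x₁ κ + s * ψ κ = x₁ 0 + s * ψ 0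
        rw [hx₁per, hψper]
      have hmem0 : ((0:ℝ), y 0 s) ∈ U := hyU 0 (Set.left_mem_Icc.mpr hκ.le) s hs
      have hmemκ : ((κ:ℝ), y 0 s) ∈ U := by
        have := hyU κ (Set.right_mem_Icc.mpr hκ.le) s hs
        rwa [hyeq] at this
      show H κ s = H 0 s
      show ψ κ * Real.exp (F κ (y κ s)) = ψ 0 * Real.exp (F 0 (y 0 s))
      rw [hψper, hyeq, hFper _ hmem0 hmemκ]
    -- continuity of Φ
    obtain ⟨C₀, hC₀⟩ := (isCompact_Icc.prod
      (isCompact_Icc (a := (0:ℝ)) (b := (1:ℝ)))).exists_bound_of_continuousOn hHcontJ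
    have hΦc : ContinuousOn Φ (Set.Icc 0 κ) := by
      intro t₀ ht₀
      apply intervalIntegral.continuousWithinAt_of_dominated_interval (bound := fun _ => C₀)
      · filter_upwards [self_mem_nhdsWithin] with t ht
        apply ContinuousOn.aestronglyMeasurable _ measurableSet_uIoc
        apply (hHs t ht).mono
        rw [Set.uIoc_of_le zero_le_one]
        exact Set.Ioc_subset_Icc_self
      · filter_upwards [self_mem_nhdsWithin] with t ht
        apply MeasureTheory.ae_of_all
        intro s hs
        rw [Set.uIoc_of_le zero_le_one] at hs
        exact hC₀ (t, s) ⟨ht, Set.Ioc_subset_Icc_self hs⟩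
      · exact intervalIntegrable_const
      · apply MeasureTheory.ae_of_all
        intro s hs
        rw [Set.uIoc_of_le zero_le_one] at hs
        have h2 : ContinuousOn (fun u : ℝ => ((u, s) : ℝ × ℝ)) (Set.Icc (0:ℝ) κ) :=
          (continuous_id.prodMk continuous_const).continuousOn
        have h1 : ContinuousOn (fun u => H u s) (Set.Icc (0:ℝ) κ) :=
          ContinuousOn.comp (g := fun p : ℝ × ℝ => H p.1 p.2) hHcontJ h2
            (fun u hu => ⟨hu, Set.Ioc_subset_Icc_self hs⟩)
        exact h1 t₀ ht₀
    -- differentiability of Φ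
    have hΦd : ∀ t₀ ∈ Set.Ioo (0:ℝ) κ,
        IntervalIntegrable (fun s => H' t₀ s) volume 0 1 ∧
          HasDerivAt Φ (∫ s in (0:ℝ)..1, H' t₀ s) t₀ := by
      intro t₀ ht₀
      obtain ⟨ε, hε, hball⟩ := Metric.isOpen_iff.mp isOpen_Ioo t₀ ht₀
      have hcb : Metric.closedBall t₀ (ε/2) ⊆ Set.Ioo 0 κ :=
        (Metric.closedBall_subset_ball (by linarith)).trans hball
      obtain ⟨C₁, hC₁⟩ := ((isCompact_closedBall t₀ (ε/2)).prod
        (isCompact_Icc (a := (0:ℝ)) (b := (1:ℝ)))).exists_bound_of_continuousOn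
        (hH'contJ.mono (fun p hp => ⟨hcb hp.1, hp.2⟩))
      have key := intervalIntegral.hasDerivAt_integral_of_dominated_loc_of_deriv_le (μ := volume) (a := (0:ℝ)) (b := (1:ℝ))
        (F := fun t s => H t s) (F' := fun t s => H' t s) (x₀ := t₀)
        (bound := fun _ => C₁) (Metric.ball_mem_nhds t₀ (half_pos hε)) ?_ ?_ ?_ ?_ intervalIntegrable_const ?_
      · exact ⟨key.1, key.2⟩
      · filter_upwards [Metric.ball_mem_nhds t₀ hε] with t ht
        apply ContinuousOn.aestronglyMeasurable _ measurableSet_uIoc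
        apply (hHs t (Set.Ioo_subset_Icc_self (hball ht))).mono
        rw [Set.uIoc_of_le zero_le_one]
        exact Set.Ioc_subset_Icc_self
      · apply ContinuousOn.intervalIntegrable
        rw [Set.uIcc_of_le zero_le_one]
        exact hHs t₀ (Set.Ioo_subset_Icc_self ht₀)
      · apply ContinuousOn.aestronglyMeasurable _ measurableSet_uIoc
        apply (hH's t₀ ht₀).mono
        rw [Set.uIoc_of_le zero_le_one]
        exact Set.Ioc_subset_Icc_self
      · apply MeasureTheory.ae_of_all
        intro s hs t ht
        rw [Set.uIoc_of_le zero_le_one] at hs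
        exact hC₁ (t, s) ⟨Metric.ball_subset_closedBall ht, Set.Ioc_subset_Icc_self hs⟩
      · apply MeasureTheory.ae_of_all
        intro s hs t ht
        rw [Set.uIoc_of_le zero_le_one] at hs
        have htIoo : t ∈ Set.Ioo (0:ℝ) κ :=
          hball (Metric.ball_subset_ball (by linarith) ht)
        have htIcc : t ∈ Set.Icc (0:ℝ) κ := Set.Ioo_subset_Icc_self htIoo
        have hsI : s ∈ Set.Icc (0:ℝ) 1 := Set.Ioc_subset_Icc_self hs
        have hψd : HasDerivAt ψ (dψ t) t := (hx₂' t htIcc).sub (hx₁' t htIcc)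
        have hyd : HasDerivAt (fun u => y u s) (L t (x₁ t) + s * dψ t) t :=
          (hx₁' t htIcc).add (hψd.const_mul s)
        have hyV : ((t, y t s) : ℝ × ℝ) ∈ V := memV _ (hyU t htIcc s hsI) htIoo
        have hFc := hchain (fun u => y u s) _ t hyd hyV
        exact hψd.mul hFc.exp
    -- ∫ H' = ∫ P
    have hinteq : ∀ t ∈ Set.Ioo (0:ℝ) κ,
        (∫ s in (0:ℝ)..1, H' t s) = ∫ s in (0:ℝ)..1, P t s := by
      intro t ht
      have htI : t ∈ Set.Icc (0:ℝ) κ := Set.mem_Icc_of_Ioo ht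
      set k : ℝ → ℝ := fun s =>
        (L t (x₁ t) + s * dψ t - L t (y t s)) * Real.exp (F t (y t s)) with hk
      have hkd : ∀ s ∈ Set.uIcc (0:ℝ) 1, HasDerivAt k (H' t s - P t s) s := by
        intro s hs
        rw [Set.uIcc_of_le zero_le_one] at hs
        have hyV : ((t, y t s) : ℝ × ℝ) ∈ V := memV _ (hyU t htI s hs) ht
        have hyds : HasDerivAt (fun u : ℝ => y t u) (ψ t) s := by
          have h0 : HasDerivAt (fun u : ℝ => x₁ t + u * ψ t) (1 * ψ t) s :=
            ((hasDerivAt_id s).mul_const (ψ t)).const_add (x₁ t)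
          exact h0.congr_deriv (one_mul _)
        have hLyd : HasDerivAt (fun u => L t (y t u)) (Lx t (y t s) * ψ t) s :=
          (hLsect t (y t s)).comp s hyds
        have hFyd : HasDerivAt (fun u => F t (y t u)) (Fx t (y t s) * ψ t) s :=
          (hFsectx t (y t s) hyV).comp s hyds
        have h1 : HasDerivAt (fun u : ℝ => L t (x₁ t) + u * dψ t - L t (y t u))
            (1 * dψ t - Lx t (y t s) * ψ t) s :=
          (((hasDerivAt_id s).mul_const (dψ t)).const_add (L t (x₁ t))).sub hLyd
        have h2 := h1.mul hFyd.exp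
        refine h2.congr_deriv (Eq.symm ?_)
        show H' t s - P t s = _
        show dψ t * Real.exp (F t (y t s)) +
            ψ t * (Real.exp (F t (y t s)) * (Ft t (y t s) + Fx t (y t s) * (L t (x₁ t) + s * dψ t)))
            - ψ t * (Real.exp (F t (y t s)) * G t (y t s)) = _
        rw [hGV t (y t s) hyV]
        ring
      have hPint : IntervalIntegrable (fun s => P t s) volume 0 1 := by
        apply ContinuousOn.intervalIntegrable
        rw [Set.uIcc_of_le zero_le_one]
        exact hPs t ht
      have hH'int := (hΦd t ht).1
      have h3 := intervalIntegral.integral_eq_sub_of_hasDerivAt hkd (hH'int.sub hPint)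
      have hy1 : y t 1 = x₂ t := by show x₁ t + 1 * ψ t = x₂ t; show x₁ t + 1 * (x₂ t - x₁ t) = x₂ t; ring
      have hy0 : y t 0 = x₁ t := by show x₁ t + 0 * ψ t = x₁ t; ring
      have hk1 : k 1 = 0 := by
        show (L t (x₁ t) + 1 * dψ t - L t (y t 1)) * Real.exp (F t (y t 1)) = 0
        rw [hy1]
        show (L t (x₁ t) + 1 * (L t (x₂ t) - L t (x₁ t)) - L t (x₂ t)) * Real.exp (F t (x₂ t)) = 0
        ring
      have hk0 : k 0 = 0 := by
        show (L t (x₁ t) + 0 * dψ t - L t (y t 0)) * Real.exp (F t (y t 0)) = 0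
        rw [hy0]
        ring
      rw [intervalIntegral.integral_sub hH'int hPint, hk1, hk0] at h3
      linarith
    -- monotonicity
    have hmonoΦ : MonotoneOn Φ (Set.Icc 0 κ) := by
      apply monotoneOn_of_deriv_nonneg (convex_Icc 0 κ) hΦc
      · intro t ht
        rw [interior_Icc] at ht
        exact ((hΦd t ht).2.differentiableAt).differentiableWithinAt
      · intro t ht
        rw [interior_Icc] at ht
        rw [(hΦd t ht).2.deriv, hinteq t ht]
        apply intervalIntegral.integral_nonneg zero_le_one
        intro s hs
        have hUy := hyU t (Set.mem_Icc_of_Ioo ht) s hs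
        have h1 := hGpos _ hUy
        have h2 := (hψpos t (Set.mem_Icc_of_Ioo ht)).le
        exact mul_nonneg h2 (mul_nonneg (Real.exp_pos _).le h1)
    have hstrictΦ : StrictMonoOn Φ (Set.Icc a b) := by
      apply strictMonoOn_of_deriv_pos (convex_Icc a b) (hΦc.mono (Set.Icc_subset_Icc haI.1 hbI.2))
      intro u hu
      rw [interior_Icc] at hu
      have hu' : u ∈ Set.Ioo 0 κ := habIoo (Set.Ioo_subset_Icc_self hu)
      have huE : u ∈ E := habE (Set.Ioo_subset_Icc_self hu)
      rw [(hΦd u hu').2.deriv, hinteq u hu']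
      apply intervalIntegral.intervalIntegral_pos_of_pos_on
      · apply ContinuousOn.intervalIntegrable
        rw [Set.uIcc_of_le zero_le_one]
        exact hPs u hu'
      · intro s hs
        have hsI : s ∈ Set.Icc (0:ℝ) 1 := Set.Ioo_subset_Icc_self hs
        have hUy := hyU u (Set.mem_Icc_of_Ioo hu') s hsI
        have hGp : 0 < G u (y u s) := lt_of_le_of_ne (hGpos _ hUy) (Ne.symm (hGne _ hUy huE))
        exact mul_pos (hψpos u (Set.mem_Icc_of_Ioo hu')) (mul_pos (Real.exp_pos _) hGp)
      · exact zero_lt_one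
    have hcontr : Φ 0 < Φ κ := by
      calc Φ 0 ≤ Φ a := hmonoΦ (Set.left_mem_Icc.mpr hκ.le) haI haI.1
        _ < Φ b := hstrictΦ (Set.left_mem_Icc.mpr hab.le) (Set.right_mem_Icc.mpr hab.le) hab
        _ ≤ Φ κ := hmonoΦ hbI (Set.right_mem_Icc.mpr hκ.le) hbI.2
    rw [hΦper] at hcontr
    exact lt_irrefl _ hcontr
  constructor
  · intro x₁ x₂ hx₁' hx₁U hx₁per hx₂' hx₂U hx₂per
    by_cases hex : ∃ t₀ ∈ Set.Icc (0:ℝ) κ, x₁ t₀ = x₂ t₀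
    · exact huniq x₁ x₂ hx₁' hx₂' hex
    · exfalso
      push_neg at hex
      have h0I : (0:ℝ) ∈ Set.Icc (0:ℝ) κ := Set.left_mem_Icc.mpr hκ.le
      have hψcont : ContinuousOn (fun u => x₂ u - x₁ u) (Set.Icc (0:ℝ) κ) :=
        (fun u hu => ((hx₂' u hu).continuousAt.sub (hx₁' u hu).continuousAt).continuousWithinAt)
      have hnz : ∀ u ∈ Set.Icc (0:ℝ) κ, x₂ u - x₁ u ≠ 0 :=
        fun u hu h => hex u hu (by linarith [sub_eq_zero.mp h])
      rcases lt_or_gt_of_ne (hex 0 h0I) with hlt0 | hlt0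
      · apply hkey x₁ x₂ hx₁' hx₁U hx₁per hx₂' hx₂U hx₂per
        intro t ht
        by_contra hcon
        push_neg at hcon
        have hlt' : x₂ t - x₁ t < 0 := by
          rcases lt_or_eq_of_le hcon with h | h
          · linarith
          · exact absurd (by linarith : x₂ t - x₁ t = 0) (hnz t ht)
        have hmem : (0:ℝ) ∈ Set.uIcc (x₂ 0 - x₁ 0) (x₂ t - x₁ t) :=
          Set.mem_uIcc.mpr (Or.inr ⟨hlt'.le, by linarith⟩)
        have hiv := intermediate_value_uIcc
          (hψcont.mono (by
            rw [Set.uIcc_of_le ht.1]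
            exact Set.Icc_subset_Icc_right ht.2))
        obtain ⟨u, hu, hu0⟩ := hiv hmem
        have huI : u ∈ Set.Icc (0:ℝ) κ := by
          rw [Set.uIcc_of_le ht.1] at hu
          exact ⟨hu.1, le_trans hu.2 ht.2⟩
        exact hnz u huI hu0
      · apply hkey x₂ x₁ hx₂' hx₂U hx₂per hx₁' hx₁U hx₁per
        intro t ht
        by_contra hcon
        push_neg at hcon
        have hlt' : 0 < x₂ t - x₁ t := by
          rcases lt_or_eq_of_le hcon with h | h
          · linarith
          · exact absurd (by linarith : x₂ t - x₁ t = 0) (hnz t ht)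
        have hmem : (0:ℝ) ∈ Set.uIcc (x₂ 0 - x₁ 0) (x₂ t - x₁ t) :=
          Set.mem_uIcc.mpr (Or.inl ⟨by linarith, hlt'.le⟩)
        have hiv := intermediate_value_uIcc
          (hψcont.mono (by
            rw [Set.uIcc_of_le ht.1]
            exact Set.Icc_subset_Icc_right ht.2))
        obtain ⟨u, hu, hu0⟩ := hiv hmem
        have huI : u ∈ Set.Icc (0:ℝ) κ := by
          rw [Set.uIcc_of_le ht.1] at hu
          exact ⟨hu.1, le_trans hu.2 ht.2⟩
        exact hnz u huI hu0
  · exact partB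
end

section
/- Let V₁, V₂ ⊆ ℝ² be open, let T : V₁ → V₂ be a C² diffeomorphism (bijective, C², with det DT(x) ≠ 0 for all x ∈ V₁), let F : V₂ → ℝ be C¹, let Q : V₁ → ℝ² be a C¹ vector field, and let P : V₂ → ℝ² be a C¹ vector field satisfying P(T(x)) = DT(x)·Q(x) for all x ∈ V₁. Define F̄ : V₁ → ℝ by F̄(x) = ln|det DT(x)| + F(T(x)). Then for every x ∈ V₁: (div P)(T(x)) + ∇F(T(x))·P(T(x)) = (div Q)(x) + ∇F̄(x)·Q(x). -/
/-!
Differentiating `P ∘ T = DT · Q` and using the symmetry of `D²T` gives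
`DP(Tx) ∘ DT(x) = DT(x) ∘ DQ(x) + D(DT)(x)(Q x)`. Multiplying on the right by the adjugate of
`DT(x)` and taking traces turns this into
`det DT · tr DP(Tx) = det DT · tr DQ(x) + tr (adj DT · D(DT)(Q))`, and by Jacobi's formula the last
term is the derivative of `det DT` along `Q`. Dividing by `det DT` gives
`div P (Tx) = div Q (x) + D_Q (log |det DT|) (x)`, while the chain rule gives
`D_P F (Tx) = D_Q (F ∘ T) (x)`.
-/

/-- Divergence of a planar vector field, via partial derivatives. -/
noncomputable def pdiv (X : ℝ × ℝ → ℝ × ℝ) (z : ℝ × ℝ) : ℝ :=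
  deriv (fun u : ℝ => (X (u, z.2)).1) z.1 + deriv (fun v : ℝ => (X (z.1, v)).2) z.2

/-- Directional derivative `∇F · X` of a scalar function along a planar vector field. -/
noncomputable def dirDeriv (F : ℝ × ℝ → ℝ) (X : ℝ × ℝ → ℝ × ℝ) (z : ℝ × ℝ) : ℝ :=
  deriv (fun u : ℝ => F (u, z.2)) z.1 * (X z).1 + deriv (fun v : ℝ => F (z.1, v)) z.2 * (X z).2

open Filter Topology

theorem Matrix.det_mul_trace_eq_of_mul_eq_add {n R : Type*} [Fintype n] [DecidableEq n]
    [CommRing R] {A L C M : Matrix n n R} (h : A * L = L * C + M) :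
    L.det * A.trace = L.det * C.trace + (L.adjugate * M).trace := by
  open Matrix in
  calc L.det * A.trace = (A * L * L.adjugate).trace := by
        rw [Matrix.mul_assoc, mul_adjugate, Matrix.mul_smul, trace_smul, Matrix.mul_one,
          smul_eq_mul]
    _ = (C * (L.adjugate * L)).trace + (L.adjugate * M).trace := by
        rw [h, Matrix.add_mul, trace_add, Matrix.mul_assoc, trace_mul_comm L, trace_mul_comm M,
          Matrix.mul_assoc]
    _ = L.det * C.trace + (L.adjugate * M).trace := by
        rw [adjugate_mul, Matrix.mul_smul, trace_smul, Matrix.mul_one, smul_eq_mul]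

noncomputable def planarMatrix (L : ℝ × ℝ →L[ℝ] ℝ × ℝ) : Matrix (Fin 2) (Fin 2) ℝ :=
  LinearMap.toMatrix (Module.Basis.finTwoProd ℝ) (Module.Basis.finTwoProd ℝ) L

theorem planarMatrix_eq (L : ℝ × ℝ →L[ℝ] ℝ × ℝ) :
    planarMatrix L = !![(L (1, 0)).1, (L (0, 1)).1; (L (1, 0)).2, (L (0, 1)).2] := by
  ext i j
  fin_cases i <;> fin_cases j <;> simp [planarMatrix, LinearMap.toMatrix_apply]

theorem det_planarMatrix (L : ℝ × ℝ →L[ℝ] ℝ × ℝ) : (planarMatrix L).det = L.det :=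
  LinearMap.det_toMatrix _ _

theorem planarMatrix_comp (L M : ℝ × ℝ →L[ℝ] ℝ × ℝ) :
    planarMatrix (L ∘L M) = planarMatrix L * planarMatrix M :=
  LinearMap.toMatrix_comp _ _ _ _ _

theorem planarMatrix_add (L M : ℝ × ℝ →L[ℝ] ℝ × ℝ) :
    planarMatrix (L + M) = planarMatrix L + planarMatrix M :=
  map_add _ _ _

theorem ContinuousLinearMap.det_planar_eq :
    (ContinuousLinearMap.det : (ℝ × ℝ →L[ℝ] ℝ × ℝ) → ℝ) =
      fun L => (L (1, 0)).1 * (L (0, 1)).2 - (L (0, 1)).1 * (L (1, 0)).2 := by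
  ext L
  rw [← det_planarMatrix, planarMatrix_eq, Matrix.det_fin_two_of]

theorem differentiable_det_planar :
    Differentiable ℝ (ContinuousLinearMap.det : (ℝ × ℝ →L[ℝ] ℝ × ℝ) → ℝ) := by
  rw [ContinuousLinearMap.det_planar_eq]
  fun_prop

/-- Jacobi's formula. -/
theorem fderiv_det_planar_apply (L M : ℝ × ℝ →L[ℝ] ℝ × ℝ) :
    fderiv ℝ ContinuousLinearMap.det L M = ((planarMatrix L).adjugate * planarMatrix M).trace := by
  have entry (v : ℝ × ℝ) (p : ℝ × ℝ →L[ℝ] ℝ) :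
      HasFDerivAt (fun L : ℝ × ℝ →L[ℝ] ℝ × ℝ => p (L v)) (p ∘L .apply ℝ _ v) L :=
    (p ∘L .apply ℝ _ v).hasFDerivAt
  have hdet : HasFDerivAt (fun L : ℝ × ℝ →L[ℝ] ℝ × ℝ =>
      (L (1, 0)).1 * (L (0, 1)).2 - (L (0, 1)).1 * (L (1, 0)).2) _ L :=
    ((entry (1, 0) (.fst ℝ ℝ ℝ)).mul (entry (0, 1) (.snd ℝ ℝ ℝ))).sub
      ((entry (0, 1) (.fst ℝ ℝ ℝ)).mul (entry (1, 0) (.snd ℝ ℝ ℝ)))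
  rw [ContinuousLinearMap.det_planar_eq, hdet.fderiv]
  simp [planarMatrix_eq, Matrix.adjugate_fin_two_of, Matrix.trace_fin_two]
  ring

theorem det_mul_trace_planarMatrix_of_comp_eq_add {A L C M : ℝ × ℝ →L[ℝ] ℝ × ℝ}
    (h : A ∘L L = L ∘L C + M) :
    L.det * (planarMatrix A).trace =
      L.det * (planarMatrix C).trace + fderiv ℝ ContinuousLinearMap.det L M := by
  have hmat := congrArg planarMatrix h
  rw [planarMatrix_add, planarMatrix_comp, planarMatrix_comp] at hmat
  rw [← det_planarMatrix, fderiv_det_planar_apply]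
  exact Matrix.det_mul_trace_eq_of_mul_eq_add hmat

section Calculus

variable {E F : Type*} [NormedAddCommGroup E] [NormedSpace ℝ E]
  [NormedAddCommGroup F] [NormedSpace ℝ F]

/-- The symmetry of `D²T` turns the term `v ↦ D²T(v, Q)` of the chain rule into `D(DT)(Q)`. -/
theorem fderiv_comp_eq_of_eventually_pushforward {T : E → F} {P : F → F} {Q : E → E} {x : E}
    (hT : ContDiffAt ℝ 2 T x) (hP : DifferentiableAt ℝ P (T x)) (hQ : DifferentiableAt ℝ Q x)
    (hPQ : (fun z => P (T z)) =ᶠ[𝓝 x] fun z => fderiv ℝ T z (Q z)) :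
    fderiv ℝ P (T x) ∘L fderiv ℝ T x =
      fderiv ℝ T x ∘L fderiv ℝ Q x + fderiv ℝ (fderiv ℝ T) x (Q x) := by
  have hDT : DifferentiableAt ℝ (fderiv ℝ T) x :=
    (hT.fderiv_right le_rfl).differentiableAt one_ne_zero
  have h := hPQ.fderiv_eq (𝕜 := ℝ)
  rw [fderiv_fun_comp x hP (hT.differentiableAt two_ne_zero), fderiv_clm_apply hDT hQ] at h
  rw [h]
  ext1 v
  simp [hT.isSymmSndFDerivAt (by simp [minSmoothness_of_isRCLikeNormedField]) v (Q x)]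

theorem hasDerivAt_comp_prodMk_left {f : ℝ × ℝ → E} {z : ℝ × ℝ} (hf : DifferentiableAt ℝ f z) :
    HasDerivAt (fun u => f (u, z.2)) (fderiv ℝ f z (1, 0)) z.1 :=
  hf.hasFDerivAt.comp_hasDerivAt_of_eq z.1 ((hasDerivAt_id z.1).prodMk (hasDerivAt_const _ _)) rfl

theorem hasDerivAt_comp_prodMk_right {f : ℝ × ℝ → E} {z : ℝ × ℝ} (hf : DifferentiableAt ℝ f z) :
    HasDerivAt (fun v => f (z.1, v)) (fderiv ℝ f z (0, 1)) z.2 :=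
  hf.hasFDerivAt.comp_hasDerivAt_of_eq z.2 ((hasDerivAt_const _ _).prodMk (hasDerivAt_id z.2)) rfl

theorem hasFDerivAt_log_abs_det_planar {A : E → ℝ × ℝ →L[ℝ] ℝ × ℝ} {x : E}
    (hA : DifferentiableAt ℝ A x) (hdet : (A x).det ≠ 0) :
    HasFDerivAt (fun z => Real.log |(A z).det|)
      ((A x).det⁻¹ • fderiv ℝ ContinuousLinearMap.det (A x) ∘L fderiv ℝ A x) x := by
  simp only [Real.log_abs]
  exact ((differentiable_det_planar _).hasFDerivAt.comp x hA.hasFDerivAt).log hdet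

end Calculus

theorem pdiv_eq_trace {X : ℝ × ℝ → ℝ × ℝ} {z : ℝ × ℝ} (hX : DifferentiableAt ℝ X z) :
    pdiv X z = (planarMatrix (fderiv ℝ X z)).trace := by
  have h₁ : HasDerivAt (fun u => (X (u, z.2)).1) (fderiv ℝ X z (1, 0)).1 z.1 :=
    (ContinuousLinearMap.fst ℝ ℝ ℝ).hasFDerivAt.comp_hasDerivAt _ (hasDerivAt_comp_prodMk_left hX)
  have h₂ : HasDerivAt (fun v => (X (z.1, v)).2) (fderiv ℝ X z (0, 1)).2 z.2 :=
    (ContinuousLinearMap.snd ℝ ℝ ℝ).hasFDerivAt.comp_hasDerivAt _ (hasDerivAt_comp_prodMk_right hX)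
  rw [pdiv, planarMatrix_eq, Matrix.trace_fin_two_of, h₁.deriv, h₂.deriv]

theorem dirDeriv_eq_fderiv {F : ℝ × ℝ → ℝ} (X : ℝ × ℝ → ℝ × ℝ) {z : ℝ × ℝ}
    (hF : DifferentiableAt ℝ F z) : dirDeriv F X z = fderiv ℝ F z (X z) := by
  rw [dirDeriv, (hasDerivAt_comp_prodMk_left hF).deriv, (hasDerivAt_comp_prodMk_right hF).deriv,
    mul_comm, mul_comm (fderiv ℝ F z (0, 1)), ← smul_eq_mul, ← smul_eq_mul,
    ← map_smul, ← map_smul, ← map_add]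
  congr 1
  ext <;> simp

/-- if `T : V₁ → V₂` is a C² diffeomorphism, `P ∘ T = DT · Q`, and
`F̄ = ln|det DT| + F ∘ T`, then `(div P + D_P F) ∘ T = div Q + D_Q F̄` on `V₁`. -/
theorem stmt_8 (V₁ V₂ : Set (ℝ × ℝ)) (hV₁ : IsOpen V₁) (hV₂ : IsOpen V₂)
    (T : ℝ × ℝ → ℝ × ℝ) (hTbij : Set.BijOn T V₁ V₂) (hT : ContDiffOn ℝ 2 T V₁)
    (hdet : ∀ x ∈ V₁, (fderiv ℝ T x).det ≠ 0)
    (F : ℝ × ℝ → ℝ) (hF : ContDiffOn ℝ 1 F V₂)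
    (Q : ℝ × ℝ → ℝ × ℝ) (hQ : ContDiffOn ℝ 1 Q V₁)
    (P : ℝ × ℝ → ℝ × ℝ) (hP : ContDiffOn ℝ 1 P V₂)
    (hPT : ∀ x ∈ V₁, P (T x) = fderiv ℝ T x (Q x))
    (Fbar : ℝ × ℝ → ℝ)
    (hFbar : ∀ x ∈ V₁, Fbar x = Real.log |(fderiv ℝ T x).det| + F (T x)) :
    ∀ x ∈ V₁,
      pdiv P (T x) + dirDeriv F P (T x) = pdiv Q x + dirDeriv Fbar Q x := by
  intro x hx
  have hTx : ContDiffAt ℝ 2 T x := hT.contDiffAt (hV₁.mem_nhds hx)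
  have hTy : V₂ ∈ 𝓝 (T x) := hV₂.mem_nhds (hTbij.mapsTo hx)
  have hPd : DifferentiableAt ℝ P (T x) := (hP.contDiffAt hTy).differentiableAt one_ne_zero
  have hFd : DifferentiableAt ℝ F (T x) := (hF.contDiffAt hTy).differentiableAt one_ne_zero
  have hQd : DifferentiableAt ℝ Q x :=
    (hQ.contDiffAt (hV₁.mem_nhds hx)).differentiableAt one_ne_zero
  have hFbar_deriv := ((hasFDerivAt_log_abs_det_planar
      ((hTx.fderiv_right le_rfl).differentiableAt one_ne_zero) (hdet x hx)).add
    (hFd.hasFDerivAt.comp x (hTx.differentiableAt two_ne_zero).hasFDerivAt)).congr_of_eventuallyEq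
    (eventually_of_mem (hV₁.mem_nhds hx) hFbar)
  have htrace := det_mul_trace_planarMatrix_of_comp_eq_add
    (fderiv_comp_eq_of_eventually_pushforward hTx hPd hQd (eventually_of_mem (hV₁.mem_nhds hx) hPT))
  rw [pdiv_eq_trace hPd, pdiv_eq_trace hQd, dirDeriv_eq_fderiv _ hFd,
    dirDeriv_eq_fderiv _ hFbar_deriv.differentiableAt, hFbar_deriv.fderiv, hPT x hx]
  simp only [_root_.add_apply, _root_.smul_apply, ContinuousLinearMap.comp_apply, smul_eq_mul]
  field_simp [hdet x hx]
  linear_combination htrace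
end

section
/- Let a_n, a_m, b_n, b_m : ℝ → ℝ be differentiable, and define R(θ,r) = (a_n(θ)r + a_m(θ)r²)/(b_n(θ) + b_m(θ)r) and 𝓕(θ,r) = −ln|b_m(θ)| + ln|b_n(θ) + b_m(θ)r| − 2 ln|r| − ln(2π). Then at every point (θ,r) with r ≠ 0, b_m(θ) ≠ 0 and b_n(θ) + b_m(θ)r ≠ 0, one has ∂R/∂r(θ,r) + ∂𝓕/∂θ(θ,r) + ∂𝓕/∂r(θ,r)·R(θ,r) = −b_m(θ)·Φ(θ)/(b_n(θ) + b_m(θ)r), where Φ(θ) = a_n(θ)/b_m(θ) − (b_n/b_m)'(θ). -/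
/-! Each of the three partial derivatives is an elementary quotient or logarithmic derivative;
substituting them turns the claim into a rational identity in `aₙ, aₘ, bₙ, bₘ, bₙ', bₘ', r`. -/

theorem HasDerivAt.log_abs {f : ℝ → ℝ} {f' x : ℝ} (hf : HasDerivAt f f' x) (hx : f x ≠ 0) :
    HasDerivAt (fun y => Real.log |f y|) (f' / f x) x := by
  simpa only [Real.log_abs] using hf.log hx

theorem hasDerivAt_affine (b d r : ℝ) : HasDerivAt (fun s => b + d * s) d r := by
  simpa using ((hasDerivAt_id' r).const_mul d).const_add b

theorem hasDerivAt_quadratic_div_affine (a c b d r : ℝ) (hr : b + d * r ≠ 0) :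
    HasDerivAt (fun s => (a * s + c * s ^ 2) / (b + d * s))
      (((a + c * (2 * r)) * (b + d * r) - (a * r + c * r ^ 2) * d) / (b + d * r) ^ 2) r := by
  have hnum : HasDerivAt (fun s => a * s + c * s ^ 2) (a + c * (2 * r)) r := by
    refine (((hasDerivAt_id' r).const_mul a).fun_add
      ((hasDerivAt_pow 2 r).const_mul c)).congr_deriv ?_
    norm_num
  exact hnum.div (hasDerivAt_affine b d r) hr

theorem stmt_10_general (an am bn bm : ℝ → ℝ)
    (hbn : Differentiable ℝ bn) (hbm : Differentiable ℝ bm)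
    (R F : ℝ → ℝ → ℝ)
    (hR : ∀ θ r : ℝ, R θ r = (an θ * r + am θ * r ^ 2) / (bn θ + bm θ * r))
    (hF : ∀ θ r : ℝ, F θ r
      = -Real.log |bm θ| + Real.log |bn θ + bm θ * r| - 2 * Real.log |r| - Real.log (2 * Real.pi))
    (θ r : ℝ) (hr : r ≠ 0) (hbmθ : bm θ ≠ 0) (hden : bn θ + bm θ * r ≠ 0) :
    deriv (fun s : ℝ => R θ s) r + deriv (fun u : ℝ => F u r) θ
        + deriv (fun s : ℝ => F θ s) r * R θ r
      = -(bm θ * (an θ / bm θ - deriv (fun u : ℝ => bn u / bm u) θ)) / (bn θ + bm θ * r) := by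
  have hbn' := (hbn θ).hasDerivAt
  have hbm' := (hbm θ).hasDerivAt
  have hR_r : deriv (fun s => R θ s) r = ((an θ + am θ * (2 * r)) * (bn θ + bm θ * r)
      - (an θ * r + am θ * r ^ 2) * bm θ) / (bn θ + bm θ * r) ^ 2 := by
    simp only [hR]
    exact (hasDerivAt_quadratic_div_affine _ _ _ _ r hden).deriv
  have hF_θ : deriv (fun u => F u r) θ
      = -(deriv bm θ / bm θ) + (deriv bn θ + deriv bm θ * r) / (bn θ + bm θ * r) := by
    simp only [hF]
    exact ((((hbm'.log_abs hbmθ).neg.add ((hbn'.add (hbm'.mul_const r)).log_abs hden)).sub_const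
      _).sub_const _).deriv
  have hF_r : deriv (fun s => F θ s) r = bm θ / (bn θ + bm θ * r) - 2 * (1 / r) := by
    simp only [hF]
    exact (((((hasDerivAt_affine _ _ r).log_abs hden).const_add _).sub
      (((hasDerivAt_id r).log_abs hr).const_mul 2)).sub_const _).deriv
  have hQ : deriv (fun u => bn u / bm u) θ
      = (deriv bn θ * bm θ - bn θ * deriv bm θ) / bm θ ^ 2 := (hbn'.div hbm' hbmθ).deriv
  rw [hR_r, hF_θ, hF_r, hQ, hR]
  have hden' : bn θ + r * bm θ ≠ 0 := by rwa [mul_comm]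
  field_simp
  ring

/-- for `R(θ,r) = (aₙ(θ)r + aₘ(θ)r²)/(bₙ(θ) + bₘ(θ)r)` and the auxiliary
function `𝓕(θ,r) = −ln|bₘ(θ)| + ln|bₙ(θ) + bₘ(θ)r| − 2 ln|r| − ln 2π`, at every point with
`r ≠ 0`, `bₘ(θ) ≠ 0` and `bₙ(θ) + bₘ(θ)r ≠ 0`,
`∂R/∂r + ∂𝓕/∂θ + ∂𝓕/∂r · R = −bₘ(θ)Φ(θ)/(bₙ(θ) + bₘ(θ)r)`,
where `Φ = aₙ/bₘ − (bₙ/bₘ)'`. -/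
theorem stmt_10 (an am bn bm : ℝ → ℝ)
    (han : Differentiable ℝ an) (ham : Differentiable ℝ am)
    (hbn : Differentiable ℝ bn) (hbm : Differentiable ℝ bm)
    (R F : ℝ → ℝ → ℝ)
    (hR : ∀ θ r : ℝ, R θ r = (an θ * r + am θ * r ^ 2) / (bn θ + bm θ * r))
    (hF : ∀ θ r : ℝ, F θ r
      = -Real.log |bm θ| + Real.log |bn θ + bm θ * r| - 2 * Real.log |r| - Real.log (2 * Real.pi))
    (θ r : ℝ) (hr : r ≠ 0) (hbmθ : bm θ ≠ 0) (hden : bn θ + bm θ * r ≠ 0) :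
    deriv (fun s : ℝ => R θ s) r + deriv (fun u : ℝ => F u r) θ
        + deriv (fun s : ℝ => F θ s) r * R θ r
      = -(bm θ * (an θ / bm θ - deriv (fun u : ℝ => bn u / bm u) θ)) / (bn θ + bm θ * r) :=
  stmt_10_general an am bn bm hbn hbm R F hR hF θ r hr hbmθ hden
end

section
/- Let a_n, a_m, b_n, b_m : ℝ → ℝ be differentiable with b_m(θ) ≠ 0 for all θ. Then for every θ ∈ ℝ and every r > 0: ∂/∂r[ a_n(θ)/(b_m(θ)r) + a_m(θ)/b_m(θ) ] + ∂/∂θ[ b_n(θ)/(b_m(θ)r²) + 1/r ] = −Φ(θ)/r², where Φ(θ) = a_n(θ)/b_m(θ) − (b_n/b_m)'(θ). -/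
theorem deriv_const_div_mul_add_const {𝕜 : Type*} [NontriviallyNormedField 𝕜] (a b c x : 𝕜) :
    deriv (fun s => a / (b * s) + c) x = -(a / b) / x ^ 2 := by
  have h : (fun s => a / (b * s)) = fun s => a / b * s⁻¹ := by
    funext s
    rw [div_mul_eq_div_div, div_eq_mul_inv]
  rw [deriv_add_const, h, deriv_const_mul_field', deriv_inv']
  ring

theorem deriv_div_mul_const_add_const {𝕜 : Type*} [NontriviallyNormedField 𝕜]
    (f g : 𝕜 → 𝕜) (k c x : 𝕜) :
    deriv (fun u => f u / (g u * k) + c) x = deriv (fun u => f u / g u) x / k := by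
  simp_rw [deriv_add_const, ← div_div, deriv_div_const]

theorem stmt_11_general (an am bn bm : ℝ → ℝ)
    (θ r : ℝ) :
    deriv (fun s : ℝ => an θ / (bm θ * s) + am θ / bm θ) r
      + deriv (fun u : ℝ => bn u / (bm u * r ^ 2) + 1 / r) θ
      = -(an θ / bm θ - deriv (fun u : ℝ => bn u / bm u) θ) / r ^ 2 := by
  rw [deriv_const_div_mul_add_const, deriv_div_mul_const_add_const]
  ring

/-- divergence of the Dulac-rescaled generalized-polar vector field:
`∂/∂r[aₙ(θ)/(bₘ(θ)r) + aₘ(θ)/bₘ(θ)] + ∂/∂θ[bₙ(θ)/(bₘ(θ)r²) + 1/r] = −Φ(θ)/r²`,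
where `Φ = aₙ/bₘ − (bₙ/bₘ)'`. -/
theorem stmt_11 (an am bn bm : ℝ → ℝ)
    (han : Differentiable ℝ an) (ham : Differentiable ℝ am)
    (hbn : Differentiable ℝ bn) (hbm : Differentiable ℝ bm)
    (hbm0 : ∀ θ : ℝ, bm θ ≠ 0) (θ r : ℝ) (hr : 0 < r) :
    deriv (fun s : ℝ => an θ / (bm θ * s) + am θ / bm θ) r
      + deriv (fun u : ℝ => bn u / (bm u * r ^ 2) + 1 / r) θ
      = -(an θ / bm θ - deriv (fun u : ℝ => bn u / bm u) θ) / r ^ 2 :=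
  stmt_11_general an am bn bm θ r
end

section
/- Let ψ : ℝ → ℝ be differentiable with ψ(θ + 2π) = ψ(θ) for all θ, and let c ∈ ℝ. If c·ψ(θ) + ψ'(θ) ≠ 0 for all θ ∈ ℝ, then c ≠ 0 and ψ(θ) ≠ 0 for all θ ∈ ℝ. -/
/-!
If `c = 0`, Rolle's theorem on one period produces a zero of `ψ'`. If `ψ θ₀ = 0`, then
`θ ↦ exp (c θ) ψ θ` vanishes at `θ₀` and `θ₀ + 2π`, and its derivative `exp (c θ) (c ψ + ψ')`
vanishes somewhere in between.
-/

open Set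

/-- Only continuity is needed, since `deriv f ξ = 0` wherever `f` is not differentiable. -/
theorem Function.Periodic.exists_deriv_eq_zero {f : ℝ → ℝ} {T : ℝ} (hf : Continuous f)
    (hper : Function.Periodic f T) (hT : 0 < T) : ∃ ξ, deriv f ξ = 0 := by
  obtain ⟨ξ, -, hξ⟩ :=
    _root_.exists_deriv_eq_zero hT hf.continuousOn (by simpa using (hper 0).symm)
  exact ⟨ξ, hξ⟩

theorem hasDerivAt_exp_const_mul_mul {f : ℝ → ℝ} {x : ℝ} (hf : DifferentiableAt ℝ f x) (c : ℝ) :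
    HasDerivAt (fun t => Real.exp (c * t) * f t)
      (Real.exp (c * x) * (c * f x + deriv f x)) x := by
  have hexp : HasDerivAt (fun t => Real.exp (c * t)) (Real.exp (c * x) * c) x :=
    ((hasDerivAt_id x).const_mul c).exp.congr_deriv (by simp)
  exact (hexp.mul hf.hasDerivAt).congr_deriv (by ring)

theorem exists_const_mul_add_deriv_eq_zero {f : ℝ → ℝ} {a b : ℝ} (hab : a < b)
    (hfc : ContinuousOn f (Icc a b)) (hfd : ∀ x ∈ Ioo a b, DifferentiableAt ℝ f x)
    (ha : f a = 0) (hb : f b = 0) (c : ℝ) : ∃ ξ ∈ Ioo a b, c * f ξ + deriv f ξ = 0 := by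
  have hgc : ContinuousOn (fun t => Real.exp (c * t) * f t) (Icc a b) := by fun_prop
  obtain ⟨ξ, hξ, hzero⟩ := exists_hasDerivAt_eq_zero hab hgc (by simp [ha, hb])
    fun x hx => hasDerivAt_exp_const_mul_mul (hfd x hx) c
  exact ⟨ξ, hξ, (mul_eq_zero.1 hzero).resolve_left (Real.exp_ne_zero _)⟩

/-- If ψ is a differentiable 2π-periodic function and
`c·ψ + ψ' ≠ 0` everywhere, then `c ≠ 0` and `ψ` never vanishes. -/
theorem stmt_12 (ψ : ℝ → ℝ) (hψ : Differentiable ℝ ψ)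
    (hper : ∀ θ : ℝ, ψ (θ + 2 * Real.pi) = ψ θ) (c : ℝ)
    (h : ∀ θ : ℝ, c * ψ θ + deriv ψ θ ≠ 0) :
    c ≠ 0 ∧ ∀ θ : ℝ, ψ θ ≠ 0 := by
  constructor
  · rintro rfl
    obtain ⟨ξ, hξ⟩ := Function.Periodic.exists_deriv_eq_zero hψ.continuous hper Real.two_pi_pos
    exact h ξ (by simp [hξ])
  · intro θ₀ hθ₀
    obtain ⟨ξ, -, hξ⟩ := exists_const_mul_add_deriv_eq_zero (b := θ₀ + 2 * Real.pi)
      (by linarith [Real.two_pi_pos])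
      hψ.continuous.continuousOn (fun x _ => hψ x) hθ₀ (by rw [hper, hθ₀]) c
    exact h ξ hξ
end

section
/- Let p, q be positive integers, let m > n ≥ 0 be integers, and let X_n, X_m be C^∞ quasi-homogeneous planar vector fields of weight (p,q) and degrees n and m respectively. Let I ⊆ ℝ be an open interval and let r, θ : I → ℝ be differentiable with r(t) > 0 for all t ∈ I. Set x(t) = r(t)^{p/(m−n)} cos θ(t) and y(t) = r(t)^{q/(m−n)} sin θ(t). If (x'(t), y'(t)) = (X_n + X_m)(x(t), y(t)) for all t ∈ I, then for all t ∈ I: r'(t) = (a_n(θ(t)) + a_m(θ(t))·r(t))/(p cos²θ(t) + q sin²θ(t)) · r(t)^{1 + (n−1)/(m−n)} and θ'(t) = (b_n(θ(t)) + b_m(θ(t))·r(t))/(p cos²θ(t) + q sin²θ(t)) · r(t)^{(n−1)/(m−n)}. -/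
/-- the generalized polar change of variables
`x = r^{p/(m−n)} cos θ`, `y = r^{q/(m−n)} sin θ` transforms the system
`(x',y') = Xₙ + Xₘ` into
`r' = (aₙ(θ) + aₘ(θ)r)/(p cos²θ + q sin²θ) · r^{1+(n−1)/(m−n)}`,
`θ' = (bₙ(θ) + bₘ(θ)r)/(p cos²θ + q sin²θ) · r^{(n−1)/(m−n)}`. -/
theorem stmt_13 (p q : ℕ) (hp : 0 < p) (hq : 0 < q) (n m : ℕ) (hnm : n < m)
    (Pn Qn Pm Qm : ℝ → ℝ → ℝ)
    (hPn : ContDiff ℝ (⊤ : ℕ∞) (fun z : ℝ × ℝ => Pn z.1 z.2))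
    (hQn : ContDiff ℝ (⊤ : ℕ∞) (fun z : ℝ × ℝ => Qn z.1 z.2))
    (hPm : ContDiff ℝ (⊤ : ℕ∞) (fun z : ℝ × ℝ => Pm z.1 z.2))
    (hQm : ContDiff ℝ (⊤ : ℕ∞) (fun z : ℝ × ℝ => Qm z.1 z.2))
    (hqhPn : ∀ l x y : ℝ, Pn (l ^ p * x) (l ^ q * y) = l ^ (p + n - 1) * Pn x y)
    (hqhQn : ∀ l x y : ℝ, Qn (l ^ p * x) (l ^ q * y) = l ^ (q + n - 1) * Qn x y)
    (hqhPm : ∀ l x y : ℝ, Pm (l ^ p * x) (l ^ q * y) = l ^ (p + m - 1) * Pm x y)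
    (hqhQm : ∀ l x y : ℝ, Qm (l ^ p * x) (l ^ q * y) = l ^ (q + m - 1) * Qm x y)
    (an am bn bm : ℝ → ℝ)
    (han : ∀ u : ℝ, an u = ((m : ℝ) - n) *
      (Real.cos u * Pn (Real.cos u) (Real.sin u) + Real.sin u * Qn (Real.cos u) (Real.sin u)))
    (ham : ∀ u : ℝ, am u = ((m : ℝ) - n) *
      (Real.cos u * Pm (Real.cos u) (Real.sin u) + Real.sin u * Qm (Real.cos u) (Real.sin u)))
    (hbn : ∀ u : ℝ, bn u = (p : ℝ) * Real.cos u * Qn (Real.cos u) (Real.sin u)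
      - (q : ℝ) * Real.sin u * Pn (Real.cos u) (Real.sin u))
    (hbm : ∀ u : ℝ, bm u = (p : ℝ) * Real.cos u * Qm (Real.cos u) (Real.sin u)
      - (q : ℝ) * Real.sin u * Pm (Real.cos u) (Real.sin u))
    (I : Set ℝ) (hI : IsOpen I) (hIconn : I.OrdConnected)
    (r θ : ℝ → ℝ)
    (hdr : ∀ t ∈ I, DifferentiableAt ℝ r t) (hdθ : ∀ t ∈ I, DifferentiableAt ℝ θ t)
    (hrpos : ∀ t ∈ I, 0 < r t)
    (x y : ℝ → ℝ)
    (hx : ∀ t : ℝ, x t = r t ^ ((p : ℝ) / ((m : ℝ) - n)) * Real.cos (θ t))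
    (hy : ∀ t : ℝ, y t = r t ^ ((q : ℝ) / ((m : ℝ) - n)) * Real.sin (θ t))
    (hsys : ∀ t ∈ I, HasDerivAt (fun s : ℝ => (x s, y s))
      (Pn (x t) (y t) + Pm (x t) (y t), Qn (x t) (y t) + Qm (x t) (y t)) t) :
    ∀ t ∈ I,
      deriv r t = (an (θ t) + am (θ t) * r t)
          / ((p : ℝ) * Real.cos (θ t) ^ 2 + (q : ℝ) * Real.sin (θ t) ^ 2)
          * r t ^ ((1 : ℝ) + ((n : ℝ) - 1) / ((m : ℝ) - n)) ∧
      deriv θ t = (bn (θ t) + bm (θ t) * r t)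
          / ((p : ℝ) * Real.cos (θ t) ^ 2 + (q : ℝ) * Real.sin (θ t) ^ 2)
          * r t ^ (((n : ℝ) - 1) / ((m : ℝ) - n)) := by
  intro t ht
  rw [han, ham, hbn, hbm]
  have hk : (0:ℝ) < (m:ℝ) - n := by
    have : (n:ℝ) < m := by exact_mod_cast hnm
    linarith
  set k : ℝ := (m:ℝ) - n with hkdef
  have hk0 : k ≠ 0 := ne_of_gt hk
  have hρ : 0 < r t := hrpos t ht
  set ρ := r t with hρdef
  set w := ρ ^ ((1:ℝ)/k) with hwdef
  have hw : 0 < w := Real.rpow_pos_of_pos hρ _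
  have hwnat : ∀ j : ℕ, ρ ^ ((j:ℝ)/k) = w ^ j := by
    intro j
    rw [hwdef, ← Real.rpow_natCast (ρ ^ ((1:ℝ)/k)) j, ← Real.rpow_mul hρ.le,
      div_mul_eq_mul_div, one_mul]
  have hwk : w ^ (m - n) = ρ := by
    have hc : ((m - n : ℕ) : ℝ) = k := by
      rw [Nat.cast_sub hnm.le]
    rw [← hwnat, hc, div_self hk0, Real.rpow_one]
  set c := Real.cos (θ t) with hcdef
  set s := Real.sin (θ t) with hsdef
  set R' := deriv r t with hRdef
  set T' := deriv θ t with hTdef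
  -- derivatives
  have hR : HasDerivAt r R' t := (hdr t ht).hasDerivAt
  have hT : HasDerivAt θ T' t := (hdθ t ht).hasDerivAt
  have hX : HasDerivAt x
      (R' * ((p:ℝ)/k) * ρ ^ ((p:ℝ)/k - 1) * c + ρ ^ ((p:ℝ)/k) * (-s * T')) t := by
    have hxfun : x = fun u => r u ^ ((p:ℝ)/k) * Real.cos (θ u) := funext hx
    rw [hxfun]
    exact (hR.rpow_const (Or.inl hρ.ne')).mul hT.cos
  have hY : HasDerivAt y
      (R' * ((q:ℝ)/k) * ρ ^ ((q:ℝ)/k - 1) * s + ρ ^ ((q:ℝ)/k) * (c * T')) t := by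
    have hyfun : y = fun u => r u ^ ((q:ℝ)/k) * Real.sin (θ u) := funext hy
    rw [hyfun]
    exact (hR.rpow_const (Or.inl hρ.ne')).mul hT.sin
  have hpair := (hsys t ht).unique (hX.prodMk hY)
  rw [Prod.mk.injEq] at hpair
  obtain ⟨E1, E2⟩ := hpair
  -- rewrite x t, y t
  have hxt : x t = w ^ p * c := by rw [hx t, hwnat]
  have hyt : y t = w ^ q * s := by rw [hy t, hwnat]
  rw [hxt, hyt, hqhPn w c s, hqhPm w c s] at E1
  rw [hxt, hyt, hqhQn w c s, hqhQm w c s] at E2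
  -- exponent normalizations
  have hu : ρ ^ ((p:ℝ)/k - 1) = w ^ p / ρ := by
    rw [Real.rpow_sub hρ, Real.rpow_one, hwnat]
  have hu' : ρ ^ ((q:ℝ)/k - 1) = w ^ q / ρ := by
    rw [Real.rpow_sub hρ, Real.rpow_one, hwnat]
  have hv : ρ ^ (((n:ℝ) - 1)/k) = w ^ n / w := by
    rw [sub_div, Real.rpow_sub hρ, hwnat, ← hwdef]
  have hv1 : ρ ^ ((1:ℝ) + ((n:ℝ) - 1)/k) = ρ * (w ^ n / w) := by
    rw [Real.rpow_add hρ, Real.rpow_one, hv]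
  rw [hu, hwnat p] at E1
  rw [hu', hwnat q] at E2
  have hpm : w ^ (p + m - 1) = w ^ (p + n - 1) * ρ := by
    rw [← hwk, ← pow_add]; congr 1; omega
  have hqm : w ^ (q + m - 1) = w ^ (q + n - 1) * ρ := by
    rw [← hwk, ← pow_add]; congr 1; omega
  rw [hpm] at E1
  rw [hqm] at E2
  have hrel1 : w ^ (p + n - 1) * w = w ^ p * w ^ n := by
    rw [← pow_succ, ← pow_add]; congr 1; omega
  have hrel2 : w ^ (q + n - 1) * w = w ^ q * w ^ n := by
    rw [← pow_succ, ← pow_add]; congr 1; omega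
  have hD : (0:ℝ) < (p:ℝ) * c ^ 2 + (q:ℝ) * s ^ 2 := by
    have h1 : (1:ℝ) ≤ (p:ℝ) := by exact_mod_cast hp
    have h2 : (1:ℝ) ≤ (q:ℝ) := by exact_mod_cast hq
    nlinarith [Real.sin_sq_add_cos_sq (θ t), sq_nonneg c, sq_nonneg s]
  have hD0 : ((p:ℝ) * c ^ 2 + (q:ℝ) * s ^ 2) ≠ 0 := ne_of_gt hD
  rw [hv1, hv]
  clear_value k ρ w c s R' T'
  clear hPn hQn hPm hQm hqhPn hqhQn hqhPm hqhQm hsys hdr hdθ hrpos hI hIconn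
    hx hy hxt hyt hX hY hR hT han ham hbn hbm hu hu' hwnat hwk hv hv1 hpm hqm
    hkdef hρdef hwdef hcdef hsdef hRdef hTdef an am bn bm x y r θ I ht t
  field_simp at E1 E2
  constructor
  · field_simp
    have G1 : R' * (((p:ℝ) * c ^ 2 + (q:ℝ) * s ^ 2) * w) * (w ^ p * w ^ q) =
        (k * (c * Pn c s + s * Qn c s) + k * (c * Pm c s + s * Qm c s) * ρ) * (ρ * w ^ n)
          * (w ^ p * w ^ q) := by
      linear_combination (-(c * w * w ^ q)) * E1 - (s * w * w ^ p) * E2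
        + (k * ρ * c * w ^ q * (Pn c s + ρ * Pm c s)) * hrel1
        + (k * ρ * s * w ^ p * (Qn c s + ρ * Qm c s)) * hrel2
    have G1' := mul_right_cancel₀ (by positivity : w ^ p * w ^ q ≠ 0) G1
    have hD' : c ^ 2 * (p:ℝ) + s ^ 2 * (q:ℝ) ≠ 0 := by
      have : (0:ℝ) < c ^ 2 * (p:ℝ) + s ^ 2 * (q:ℝ) := by linarith
      exact ne_of_gt this
    rw [eq_div_iff hD']
    linear_combination G1'
  · field_simp
    have G2 : T' * (((p:ℝ) * c ^ 2 + (q:ℝ) * s ^ 2) * w) * (k * ρ * (w ^ p * w ^ q)) =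
        ((p:ℝ) * c * Qn c s - (q:ℝ) * s * Pn c s
          + ((p:ℝ) * c * Qm c s - (q:ℝ) * s * Pm c s) * ρ) * w ^ n
          * (k * ρ * (w ^ p * w ^ q)) := by
      linear_combination ((q:ℝ) * s * w * w ^ q) * E1 - ((p:ℝ) * c * w * w ^ p) * E2
        - ((q:ℝ) * s * k * ρ * w ^ q * (Pn c s + ρ * Pm c s)) * hrel1
        + ((p:ℝ) * c * k * ρ * w ^ p * (Qn c s + ρ * Qm c s)) * hrel2
    have G2' := mul_right_cancel₀ (by positivity : k * ρ * (w ^ p * w ^ q) ≠ 0) G2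
    linear_combination G2'
end

section
/- Let a_n, a_m, b_n, b_m : ℝ → ℝ be C¹ with b_n(θ)·b_m(θ) ≠ 0 for all θ ∈ ℝ. Suppose r : ℝ → ℝ is differentiable and satisfies r'(θ) = (a_n(θ)r(θ) + a_m(θ)r(θ)²)/(b_n(θ) + b_m(θ)r(θ)) with b_n(θ) + b_m(θ)r(θ) ≠ 0 for all θ. Define ρ(τ) = b_m(2πτ)·r(2πτ)/(b_n(2πτ) + b_m(2πτ)·r(2πτ)). Then ρ'(τ) = α₃(2πτ)ρ(τ)³ + α₂(2πτ)ρ(τ)² + α₁(2πτ)ρ(τ) for all τ, where α₃(θ) = 2π(a_n(θ)b_m(θ) − a_m(θ)b_n(θ))/(b_n(θ)b_m(θ)), α₂(θ) = 2π(a_m(θ)b_n(θ) − 2a_n(θ)b_m(θ) + W(b_m,b_n)(θ))/(b_n(θ)b_m(θ)), α₁(θ) = 2π(a_n(θ)b_m(θ) − W(b_m,b_n)(θ))/(b_n(θ)b_m(θ)). -/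
/-! With `D = bₙ + bₘ r` the quotient rule gives `ρ' = (bₙ (bₘ r)' - bₙ' bₘ r)/D²` in the variable
`θ`. Substituting `r' = (aₙ r + aₘ r²)/D` and using `ρ = bₘ r/D`, `1 - ρ = bₙ/D`, this becomes a
cubic polynomial in `ρ` without constant term; the time change `θ = 2πτ` contributes the factor `2π`. -/

theorem HasDerivAt.cherkas {𝕜 : Type*} [NontriviallyNormedField 𝕜] {bn bm r : 𝕜 → 𝕜}
    {bn' bm' r' θ : 𝕜} (hbn : HasDerivAt bn bn' θ) (hbm : HasDerivAt bm bm' θ)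
    (hr : HasDerivAt r r' θ) (hden : bn θ + bm θ * r θ ≠ 0) :
    HasDerivAt (fun t => bm t * r t / (bn t + bm t * r t))
      ((bn θ * (bm' * r θ + bm θ * r') - bn' * (bm θ * r θ)) / (bn θ + bm θ * r θ) ^ 2) θ :=
  ((hbm.mul hr).div (hbn.add (hbm.mul hr)) hden).congr_deriv <| by
    simp only [Pi.add_apply, Pi.mul_apply]
    ring

theorem cherkas_abel_identity {K : Type*} [Field K] {an am bn bm bn' bm' r ρ : K}
    (hbn : bn ≠ 0) (hbm : bm ≠ 0) (hden : bn + bm * r ≠ 0) (hρ : ρ = bm * r / (bn + bm * r)) :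
    (bn * (bm' * r + bm * ((an * r + am * r ^ 2) / (bn + bm * r))) - bn' * (bm * r))
        / (bn + bm * r) ^ 2
      = (an * bm - am * bn) / (bn * bm) * ρ ^ 3
        + (am * bn - 2 * an * bm + (bm * bn' - bm' * bn)) / (bn * bm) * ρ ^ 2
        + (an * bm - (bm * bn' - bm' * bn)) / (bn * bm) * ρ := by
  subst hρ
  -- an atomic denominator keeps `field_simp` from normalizing it out of reach of `hden`
  generalize hD : bn + bm * r = D at hden ⊢
  field_simp
  subst hD
  ring

theorem stmt_14_general (an am bn bm : ℝ → ℝ)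
    (hbn : ContDiff ℝ 1 bn) (hbm : ContDiff ℝ 1 bm)
    (hbnbm : ∀ θ : ℝ, bn θ * bm θ ≠ 0)
    (r : ℝ → ℝ)
    (hden : ∀ θ : ℝ, bn θ + bm θ * r θ ≠ 0)
    (hr : ∀ θ : ℝ, HasDerivAt r
      ((an θ * r θ + am θ * (r θ) ^ 2) / (bn θ + bm θ * r θ)) θ)
    (ρ : ℝ → ℝ)
    (hρ : ∀ τ : ℝ, ρ τ = bm (2 * Real.pi * τ) * r (2 * Real.pi * τ)
      / (bn (2 * Real.pi * τ) + bm (2 * Real.pi * τ) * r (2 * Real.pi * τ)))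
    (α₁ α₂ α₃ : ℝ → ℝ)
    (hα₃ : ∀ θ : ℝ, α₃ θ = 2 * Real.pi * (an θ * bm θ - am θ * bn θ) / (bn θ * bm θ))
    (hα₂ : ∀ θ : ℝ, α₂ θ = 2 * Real.pi *
      (am θ * bn θ - 2 * an θ * bm θ + (bm θ * deriv bn θ - deriv bm θ * bn θ))
        / (bn θ * bm θ))
    (hα₁ : ∀ θ : ℝ, α₁ θ = 2 * Real.pi *
      (an θ * bm θ - (bm θ * deriv bn θ - deriv bm θ * bn θ)) / (bn θ * bm θ)) :
    ∀ τ : ℝ, HasDerivAt ρ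
      (α₃ (2 * Real.pi * τ) * (ρ τ) ^ 3 + α₂ (2 * Real.pi * τ) * (ρ τ) ^ 2
        + α₁ (2 * Real.pi * τ) * ρ τ) τ := by
  intro τ
  set θ := 2 * Real.pi * τ
  have hcherkas := HasDerivAt.cherkas (hbn.differentiable one_ne_zero θ).hasDerivAt
    (hbm.differentiable one_ne_zero θ).hasDerivAt (hr θ) (hden θ)
  have htime : HasDerivAt (fun τ : ℝ => 2 * Real.pi * τ) (2 * Real.pi) τ := by
    simpa using (hasDerivAt_id τ).const_mul (2 * Real.pi)
  refine ((hcherkas.comp τ htime).congr_of_eventuallyEq (.of_forall hρ)).congr_deriv ?_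
  rw [cherkas_abel_identity (left_ne_zero_of_mul (hbnbm θ)) (right_ne_zero_of_mul (hbnbm θ))
    (hden θ) (hρ τ), hα₁, hα₂, hα₃]
  ring

/-- the Cherkas transformation `ρ = bₘ(θ)r/(bₙ(θ) + bₘ(θ)r)`, `θ = 2πτ`
turns a solution of the generalized-polar equation
`dr/dθ = (aₙ(θ)r + aₘ(θ)r²)/(bₙ(θ) + bₘ(θ)r)` into a solution of the Abel equation
`dρ/dτ = α₃(2πτ)ρ³ + α₂(2πτ)ρ² + α₁(2πτ)ρ`. -/
theorem stmt_14 (an am bn bm : ℝ → ℝ)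
    (han : ContDiff ℝ 1 an) (ham : ContDiff ℝ 1 am)
    (hbn : ContDiff ℝ 1 bn) (hbm : ContDiff ℝ 1 bm)
    (hbnbm : ∀ θ : ℝ, bn θ * bm θ ≠ 0)
    (r : ℝ → ℝ)
    (hden : ∀ θ : ℝ, bn θ + bm θ * r θ ≠ 0)
    (hr : ∀ θ : ℝ, HasDerivAt r
      ((an θ * r θ + am θ * (r θ) ^ 2) / (bn θ + bm θ * r θ)) θ)
    (ρ : ℝ → ℝ)
    (hρ : ∀ τ : ℝ, ρ τ = bm (2 * Real.pi * τ) * r (2 * Real.pi * τ)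
      / (bn (2 * Real.pi * τ) + bm (2 * Real.pi * τ) * r (2 * Real.pi * τ)))
    (α₁ α₂ α₃ : ℝ → ℝ)
    (hα₃ : ∀ θ : ℝ, α₃ θ = 2 * Real.pi * (an θ * bm θ - am θ * bn θ) / (bn θ * bm θ))
    (hα₂ : ∀ θ : ℝ, α₂ θ = 2 * Real.pi *
      (am θ * bn θ - 2 * an θ * bm θ + (bm θ * deriv bn θ - deriv bm θ * bn θ))
        / (bn θ * bm θ))
    (hα₁ : ∀ θ : ℝ, α₁ θ = 2 * Real.pi *
      (an θ * bm θ - (bm θ * deriv bn θ - deriv bm θ * bn θ)) / (bn θ * bm θ)) :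
    ∀ τ : ℝ, HasDerivAt ρ
      (α₃ (2 * Real.pi * τ) * (ρ τ) ^ 3 + α₂ (2 * Real.pi * τ) * (ρ τ) ^ 2
        + α₁ (2 * Real.pi * τ) * ρ τ) τ :=
  stmt_14_general an am bn bm hbn hbm hbnbm r hden hr ρ hρ α₁ α₂ α₃ hα₃ hα₂ hα₁
end

section
/- Let k > l ≥ 0 be integers and consider the planar system (dx/dt, dy/dt) = X_n(x,y) + X_m(x,y) with X_n(x,y) = ((x−y)(x²+y²)^l, (x+y)(x²+y²)^l) and X_m(x,y) = (−(x+y)(x²+y²)^k, (x−y)(x²+y²)^k). Then γ(t) = (cos 2t, sin 2t) is a nonconstant 2π-periodic solution of the system; in particular the unit circle x² + y² = 1 is a periodic orbit. -/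
/-!
On the unit circle both weight factors `(x² + y²)ˡ` and `(x² + y²)ᵏ` equal `1`, so `Xₙ + Xₘ`
reduces there to the rotation field `(x, y) ↦ (-2y, 2x)`, which is the velocity of
`t ↦ (cos 2t, sin 2t)`.
-/

open Real

lemma hasDerivAt_cos_sin_const_mul (c t : ℝ) :
    HasDerivAt (fun t => (cos (c * t), sin (c * t))) (-(c * sin (c * t)), c * cos (c * t)) t := by
  have hlin : HasDerivAt (fun t : ℝ => c * t) c t := by
    simpa using (hasDerivAt_id t).const_mul c
  convert hlin.cos.prodMk hlin.sin using 1
  ext <;> simp only <;> ring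

lemma range_cos_sin : Set.range (fun θ => (cos θ, sin θ)) = {z : ℝ × ℝ | z.1 ^ 2 + z.2 ^ 2 = 1} := by
  ext z
  simp only [Set.mem_range, Set.mem_ofPred_eq]
  constructor
  · rintro ⟨θ, rfl⟩
    exact cos_sq_add_sin_sq θ
  · intro hz
    set w : ℂ := ⟨z.1, z.2⟩
    have hw : ‖w‖ = 1 := by
      rw [Complex.norm_def, Complex.normSq_mk, ← sq, ← sq, hz, sqrt_one]
    have hw0 : w ≠ 0 := norm_ne_zero_iff.mp (hw ▸ one_ne_zero)
    refine ⟨w.arg, Prod.ext ?_ ?_⟩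
    · simpa [hw] using Complex.cos_arg hw0
    · simpa [hw] using Complex.sin_arg w

lemma range_cos_sin_const_mul {c : ℝ} (hc : c ≠ 0) :
    Set.range (fun t => (cos (c * t), sin (c * t))) = {z : ℝ × ℝ | z.1 ^ 2 + z.2 ^ 2 = 1} := by
  rw [← range_cos_sin]
  exact (mul_left_surjective₀ hc).range_comp (fun θ => (cos θ, sin θ))

theorem stmt_15_general (k l : ℕ)
    (Xn Xm : ℝ × ℝ → ℝ × ℝ)
    (hXn : ∀ z : ℝ × ℝ, Xn z = ((z.1 - z.2) * (z.1 ^ 2 + z.2 ^ 2) ^ l,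
      (z.1 + z.2) * (z.1 ^ 2 + z.2 ^ 2) ^ l))
    (hXm : ∀ z : ℝ × ℝ, Xm z = (-((z.1 + z.2) * (z.1 ^ 2 + z.2 ^ 2) ^ k),
      (z.1 - z.2) * (z.1 ^ 2 + z.2 ^ 2) ^ k))
    (γ : ℝ → ℝ × ℝ)
    (hγ : ∀ t : ℝ, γ t = (Real.cos (2 * t), Real.sin (2 * t))) :
    (∀ t : ℝ, HasDerivAt γ (Xn (γ t) + Xm (γ t)) t) ∧
    (∀ t : ℝ, γ (t + 2 * Real.pi) = γ t) ∧
    (∃ t s : ℝ, γ t ≠ γ s) ∧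
    Set.range γ = {z : ℝ × ℝ | z.1 ^ 2 + z.2 ^ 2 = 1} := by
  obtain rfl : γ = fun t => (cos (2 * t), sin (2 * t)) := funext hγ
  refine ⟨fun t => ?_, fun t => ?_, ⟨0, π / 2, ?_⟩, range_cos_sin_const_mul two_ne_zero⟩
  · have h_field : Xn (cos (2 * t), sin (2 * t)) + Xm (cos (2 * t), sin (2 * t)) =
        (-(2 * sin (2 * t)), 2 * cos (2 * t)) := by
      simp only [hXn, hXm, cos_sq_add_sin_sq, one_pow, mul_one, Prod.mk_add_mk, Prod.mk.injEq]
      constructor <;> ring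
    exact h_field ▸ hasDerivAt_cos_sin_const_mul 2 t
  · simp only [mul_add, show 2 * (2 * π) = 2 * π + 2 * π by ring, ← add_assoc, cos_add_two_pi,
      sin_add_two_pi]
  · norm_num [mul_div_cancel₀ π two_ne_zero]

/-- for `Xₙ(x,y) = ((x−y)(x²+y²)ˡ, (x+y)(x²+y²)ˡ)` and
`Xₘ(x,y) = (−(x+y)(x²+y²)ᵏ, (x−y)(x²+y²)ᵏ)` with `k > l ≥ 0`, the curve
`γ(t) = (cos 2t, sin 2t)` is a nonconstant 2π-periodic solution of `(x',y') = Xₙ + Xₘ`,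
and its image is the unit circle. -/
theorem stmt_15 (k l : ℕ) (hkl : l < k)
    (Xn Xm : ℝ × ℝ → ℝ × ℝ)
    (hXn : ∀ z : ℝ × ℝ, Xn z = ((z.1 - z.2) * (z.1 ^ 2 + z.2 ^ 2) ^ l,
      (z.1 + z.2) * (z.1 ^ 2 + z.2 ^ 2) ^ l))
    (hXm : ∀ z : ℝ × ℝ, Xm z = (-((z.1 + z.2) * (z.1 ^ 2 + z.2 ^ 2) ^ k),
      (z.1 - z.2) * (z.1 ^ 2 + z.2 ^ 2) ^ k))
    (γ : ℝ → ℝ × ℝ)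
    (hγ : ∀ t : ℝ, γ t = (Real.cos (2 * t), Real.sin (2 * t))) :
    (∀ t : ℝ, HasDerivAt γ (Xn (γ t) + Xm (γ t)) t) ∧
    (∀ t : ℝ, γ (t + 2 * Real.pi) = γ t) ∧
    (∃ t s : ℝ, γ t ≠ γ s) ∧
    Set.range γ = {z : ℝ × ℝ | z.1 ^ 2 + z.2 ^ 2 = 1} :=
  stmt_15_general k l Xn Xm hXn hXm γ hγ
end

section
/- Let k > l ≥ 0 be integers and consider the planar vector field X = X_n + X_m with X_n(x,y) = ((x³ − x²y + xy²)(x²+y²)^l, (x³ + x²y + y³)(x²+y²)^l) and X_m(x,y) = (−(x+y)(x²+y²)^{k+1}, (x−y)(x²+y²)^{k+1}). Then the unit circle is invariant and carries no equilibria: for every (x,y) with x² + y² = 1, writing X = (P,Q), one has x·P(x,y) + y·Q(x,y) = 0 and X(x,y) ≠ (0,0). In particular the unit circle x² + y² = 1 is a periodic orbit of the system (dx/dt, dy/dt) = X(x,y). -/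
/-!
On the unit circle `X` reduces to `(1 + x²) • (-y, x)`, so the polar angle obeys
`θ' = 1 + cos² θ`, which integrates to `tan θ = √2 tan (√2 t)`. This yields the explicit
solution `(cos √2t, √2 sin √2t) / √(1 + sin² √2t)`, the radial projection of a
parametrized ellipse onto the circle, of period `√2 π`.
-/

open Real

noncomputable section

def circleField (z : ℝ × ℝ) : ℝ × ℝ :=
  (-(z.2 * (1 + z.1 ^ 2)), z.1 * (1 + z.1 ^ 2))

lemma circleField_ne_zero {z : ℝ × ℝ} (hz : z.1 ^ 2 + z.2 ^ 2 = 1) : circleField z ≠ (0, 0) := by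
  intro h
  have hpos : (0 : ℝ) < 1 + z.1 ^ 2 := by positivity
  simp only [circleField, Prod.mk.injEq, neg_eq_zero, mul_eq_zero, hpos.ne', or_false] at h
  rw [h.1, h.2] at hz
  norm_num at hz

lemma exists_cos_eq_and_sin_eq {c s : ℝ} (h : c ^ 2 + s ^ 2 = 1) :
    ∃ θ : ℝ, cos θ = c ∧ sin θ = s := by
  have hnorm : ‖(⟨c, s⟩ : ℂ)‖ = 1 := by
    rw [Complex.norm_def, Complex.normSq_mk, ← sq, ← sq, h, sqrt_one]
  have hne : (⟨c, s⟩ : ℂ) ≠ 0 := by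
    rintro h0
    simp [h0] at hnorm
  exact ⟨Complex.arg ⟨c, s⟩, by simp [Complex.cos_arg hne, hnorm],
    by simp [Complex.sin_arg, hnorm]⟩

lemma sqrt_two_sq : √2 ^ 2 = 2 := sq_sqrt zero_le_two

def orbitRadius (t : ℝ) : ℝ := √(1 + sin (√2 * t) ^ 2)

lemma orbitRadius_pos (t : ℝ) : 0 < orbitRadius t := sqrt_pos.2 (by positivity)

lemma orbitRadius_sq (t : ℝ) : orbitRadius t ^ 2 = 1 + sin (√2 * t) ^ 2 :=
  sq_sqrt (by positivity)

def circleOrbit (t : ℝ) : ℝ × ℝ :=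
  (cos (√2 * t) / orbitRadius t, √2 * sin (√2 * t) / orbitRadius t)

lemma circleOrbit_mem_circle (t : ℝ) : (circleOrbit t).1 ^ 2 + (circleOrbit t).2 ^ 2 = 1 := by
  have hR := (orbitRadius_pos t).ne'
  simp only [circleOrbit]
  field_simp
  linear_combination sin_sq_add_cos_sq (√2 * t) - orbitRadius_sq t + sin (√2 * t) ^ 2 * sqrt_two_sq

lemma hasDerivAt_circleOrbit (t : ℝ) : HasDerivAt circleOrbit (circleField (circleOrbit t)) t := by
  have hR := (orbitRadius_pos t).ne'
  have hR2 := orbitRadius_sq t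
  have hpyth := sin_sq_add_cos_sq (√2 * t)
  have hlin : HasDerivAt (fun t : ℝ => √2 * t) √2 t := by
    simpa using (hasDerivAt_id t).const_mul √2
  have hsin := (hasDerivAt_sin (√2 * t)).comp t hlin
  have hcos := (hasDerivAt_cos (√2 * t)).comp t hlin
  have hrad : HasDerivAt orbitRadius
      (1 / (2 * orbitRadius t) * (2 * sin (√2 * t) * (cos (√2 * t) * √2))) t := by
    refine (hasDerivAt_sqrt (by positivity)).comp t ?_
    simpa using (hsin.pow 2).const_add 1
  convert (hcos.div hrad hR).prodMk ((hsin.const_mul √2).div hrad hR) using 1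
  · rfl
  simp only [circleOrbit, circleField, Function.comp_apply, Prod.mk.injEq]
  constructor
  · field_simp
    ring
  · field_simp
    rw [sqrt_two_sq]
    linear_combination (-cos (√2 * t)) * hR2 + cos (√2 * t) * hpyth

lemma circleOrbit_add_period (t : ℝ) : circleOrbit (t + √2 * π) = circleOrbit t := by
  have h : √2 * (t + √2 * π) = √2 * t + 2 * π := by linear_combination π * sqrt_two_sq
  simp only [circleOrbit, orbitRadius, h, sin_add_two_pi, cos_add_two_pi]

lemma range_circleOrbit : Set.range circleOrbit = {z : ℝ × ℝ | z.1 ^ 2 + z.2 ^ 2 = 1} := by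
  refine subset_antisymm (Set.range_subset_iff.2 circleOrbit_mem_circle) ?_
  rintro ⟨a, b⟩ (hab : a ^ 2 + b ^ 2 = 1)
  -- `(a, b)` is the radial projection of the ellipse point `(cos θ, √2 sin θ) = √2 (a, b) / √(1 + a²)`
  set w := √(1 + a ^ 2)
  have hw : 0 < w := sqrt_pos.2 (by positivity)
  have hw2 : w ^ 2 = 1 + a ^ 2 := sq_sqrt (by positivity)
  obtain ⟨θ, hcos, hsin⟩ : ∃ θ : ℝ, cos θ = √2 * a / w ∧ sin θ = b / w := by
    refine exists_cos_eq_and_sin_eq ?_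
    field_simp
    linear_combination a ^ 2 * sqrt_two_sq - hw2 + hab
  have hθ : √2 * (θ / √2) = θ := mul_div_cancel₀ θ (by positivity)
  have hrad : orbitRadius (θ / √2) = √2 / w := by
    rw [orbitRadius, hθ, hsin, ← sqrt_sq (div_nonneg (sqrt_nonneg 2) hw.le)]
    congr 1
    field_simp
    linear_combination hw2 + hab - sqrt_two_sq
  refine ⟨θ / √2, ?_⟩
  have : √2 ≠ 0 := by positivity
  simp only [circleOrbit, hθ, hrad, hcos, hsin, Prod.mk.injEq]
  constructor <;> field_simp

end

theorem stmt_16_general (k l : ℕ)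
    (Xn Xm X : ℝ × ℝ → ℝ × ℝ)
    (hXn : ∀ z : ℝ × ℝ, Xn z =
      ((z.1 ^ 3 - z.1 ^ 2 * z.2 + z.1 * z.2 ^ 2) * (z.1 ^ 2 + z.2 ^ 2) ^ l,
       (z.1 ^ 3 + z.1 ^ 2 * z.2 + z.2 ^ 3) * (z.1 ^ 2 + z.2 ^ 2) ^ l))
    (hXm : ∀ z : ℝ × ℝ, Xm z =
      (-((z.1 + z.2) * (z.1 ^ 2 + z.2 ^ 2) ^ (k + 1)),
       (z.1 - z.2) * (z.1 ^ 2 + z.2 ^ 2) ^ (k + 1)))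
    (hX : ∀ z : ℝ × ℝ, X z = Xn z + Xm z) :
    (∀ z : ℝ × ℝ, z.1 ^ 2 + z.2 ^ 2 = 1 →
      z.1 * (X z).1 + z.2 * (X z).2 = 0 ∧ X z ≠ (0, 0)) ∧
    ∃ (γ : ℝ → ℝ × ℝ) (T : ℝ), 0 < T ∧
      (∀ t : ℝ, HasDerivAt γ (X (γ t)) t) ∧
      (∀ t : ℝ, γ (t + T) = γ t) ∧
      Set.range γ = {z : ℝ × ℝ | z.1 ^ 2 + z.2 ^ 2 = 1} := by
  have hX_circle : ∀ z : ℝ × ℝ, z.1 ^ 2 + z.2 ^ 2 = 1 → X z = circleField z := by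
    intro z hz
    rw [hX, hXn, hXm, hz, one_pow, one_pow, circleField, Prod.mk_add_mk, Prod.mk.injEq]
    exact ⟨by linear_combination z.1 * hz, by linear_combination z.2 * hz⟩
  refine ⟨fun z hz => ⟨?_, ?_⟩, circleOrbit, √2 * π, by positivity, fun t => ?_,
    circleOrbit_add_period, range_circleOrbit⟩
  · rw [hX_circle z hz, circleField]
    ring
  · exact hX_circle z hz ▸ circleField_ne_zero hz
  · rw [hX_circle _ (circleOrbit_mem_circle t)]
    exact hasDerivAt_circleOrbit t

/-- for `Xₙ(x,y) = ((x³−x²y+xy²)(x²+y²)ˡ, (x³+x²y+y³)(x²+y²)ˡ)` and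
`Xₘ(x,y) = (−(x+y)(x²+y²)^{k+1}, (x−y)(x²+y²)^{k+1})` with `k > l ≥ 0`, the unit circle is
invariant and free of equilibria for `X = Xₙ + Xₘ = (P,Q)`: on `x² + y² = 1` one has
`x·P + y·Q = 0` and `X ≠ 0`; in particular the unit circle is a periodic orbit of
`(x',y') = X(x,y)`. -/
theorem stmt_16 (k l : ℕ) (hkl : l < k)
    (Xn Xm X : ℝ × ℝ → ℝ × ℝ)
    (hXn : ∀ z : ℝ × ℝ, Xn z =
      ((z.1 ^ 3 - z.1 ^ 2 * z.2 + z.1 * z.2 ^ 2) * (z.1 ^ 2 + z.2 ^ 2) ^ l,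
       (z.1 ^ 3 + z.1 ^ 2 * z.2 + z.2 ^ 3) * (z.1 ^ 2 + z.2 ^ 2) ^ l))
    (hXm : ∀ z : ℝ × ℝ, Xm z =
      (-((z.1 + z.2) * (z.1 ^ 2 + z.2 ^ 2) ^ (k + 1)),
       (z.1 - z.2) * (z.1 ^ 2 + z.2 ^ 2) ^ (k + 1)))
    (hX : ∀ z : ℝ × ℝ, X z = Xn z + Xm z) :
    (∀ z : ℝ × ℝ, z.1 ^ 2 + z.2 ^ 2 = 1 →
      z.1 * (X z).1 + z.2 * (X z).2 = 0 ∧ X z ≠ (0, 0)) ∧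
    ∃ (γ : ℝ → ℝ × ℝ) (T : ℝ), 0 < T ∧
      (∀ t : ℝ, HasDerivAt γ (X (γ t)) t) ∧
      (∀ t : ℝ, γ (t + T) = γ t) ∧
      Set.range γ = {z : ℝ × ℝ | z.1 ^ 2 + z.2 ^ 2 = 1} :=
  stmt_16_general k l Xn Xm X hXn hXm hX
end
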